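/- arXiv:2211.11819 — 14 statements merged into one kernel-verified Lean document; each statement's English description precedes it below -/
import Mathlib

section
/- Let T be a descent modulus for a translation cone F of continuous coercive functions on a nonempty topological space X, and let f, g ∈ dom(T) and c ∈ ℝ be such that (i) T[f](x) = T[g](x) for all x ∈ X, and (ii) f(x) = g(x) + c for all x in the T-critical set Z_T(f). Then f(x) = g(x) + c for all x ∈ X. -/
/-!
Suppose `f > g + c` at some point `x`. For a slope `r > 1` close to `1`, some point `y` sees
`r • g` descend from `y` no faster than `f` does (a maximizer of `f - r • g` on a compact
sublevel set of `g`, or `x` itself when every strictly lower level of `g` already satisfies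
`f ≤ g + c`). Monotonicity then gives `T[r • g](y) ≤ T[f](y) ≤ T[g](y)`, which scalar-monotonicity
only allows when `T[g](y) = 0`; so `y` is critical and `f y ≤ g y + c`, and letting `r → 1`
contradicts `f x > g x + c`. Exchanging `f` and `g` gives the reverse inequality.
-/

open Set
open scoped ENNReal

theorem bddBelow_range_of_isCompact_sublevel {X : Type*} [TopologicalSpace X] {g : X → ℝ}
    (hg : Continuous g) {a : ℝ} (hK : IsCompact {x | g x ≤ a}) : BddBelow (range g) := by
  obtain ⟨b, hb⟩ := hK.bddBelow_image hg.continuousOn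
  refine ⟨min b a, ?_⟩
  rintro _ ⟨x, rfl⟩
  rcases le_total (g x) a with hx | hx
  · exact (min_le_left b a).trans (hb ⟨x, hx, rfl⟩)
  · exact (min_le_right b a).trans hx

section

variable {X : Type*}

structure IsDescentModulus_s0 (F : Set (X → ℝ)) (T : (X → ℝ) → X → ℝ≥0∞) : Prop where
  eq_zero_of_isMin : ∀ f ∈ F, ∀ x : X, (∀ z, f x ≤ f z) → T f x = 0
  mono : ∀ f ∈ F, ∀ g ∈ F, ∀ x : X,
    (∀ z, max (g x - g z) 0 ≤ max (f x - f z) 0) → T g x ≤ T f x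
  lt_smul : ∀ f ∈ F, ∀ x : X, ∀ r : ℝ, 1 < r → 0 < T f x → T f x < ⊤ →
    T f x < T (fun y => r * f y) x

namespace IsDescentModulus_s0

variable {F : Set (X → ℝ)} {T : (X → ℝ) → X → ℝ≥0∞} {f g : X → ℝ} {x : X} {r c : ℝ}

theorem eq_zero_of_smul_le (hT : IsDescentModulus_s0 F T) (hg : g ∈ F) (hfin : T g x ≠ ⊤)
    (hr : 1 < r) (h : T (fun z => r * g z) x ≤ T g x) : T g x = 0 := by
  by_contra h0
  exact (hT.lt_smul g hg x r hr (pos_iff_ne_zero.2 h0) hfin.lt_top).not_ge h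

theorem smul_le_of_slope_le (hT : IsDescentModulus_s0 F T) (hf : f ∈ F)
    (hrg : (fun z => r * g z) ∈ F) (hr : 0 ≤ r)
    (hslope : ∀ z, g z < g x → r * (g x - g z) ≤ f x - f z) :
    T (fun z => r * g z) x ≤ T f x := by
  refine hT.mono f hf _ hrg x fun z => ?_
  rcases lt_or_ge (g z) (g x) with hz | hz
  · exact max_le_max (by linarith [hslope z hz]) le_rfl
  · have : r * g x ≤ r * g z := mul_le_mul_of_nonneg_left hz hr
    exact max_le (by linarith [le_max_right (f x - f z) 0]) (le_max_right _ _)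

/-- A point from which `r • g` (`r > 1`) descends no faster than `f` is critical for `g`. -/
theorem le_add_of_slope_le (hT : IsDescentModulus_s0 F T)
    (hF_cone : ∀ f ∈ F, ∀ r : ℝ, 0 ≤ r → (fun x => r * f x) ∈ F) (hf : f ∈ F) (hg : g ∈ F)
    (hfin : T g x ≠ ⊤) (hle : T f x ≤ T g x) (hcrit : T g x = 0 → f x ≤ g x + c)
    (hr : 1 < r) (hslope : ∀ z, g z < g x → r * (g x - g z) ≤ f x - f z) :
    f x ≤ g x + c :=
  hcrit <| hT.eq_zero_of_smul_le hg hfin hr <|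
    (hT.smul_le_of_slope_le hf (hF_cone g hg r (by linarith)) (by linarith) hslope).trans hle

theorem le_add_of_forall_lt (hT : IsDescentModulus_s0 F T)
    (hF_cone : ∀ f ∈ F, ∀ r : ℝ, 0 ≤ r → (fun x => r * f x) ∈ F) (hf : f ∈ F) (hg : g ∈ F)
    (hbdd : BddBelow (range g)) (hfin : T g x ≠ ⊤) (hle : T f x ≤ T g x)
    (hcrit : T g x = 0 → f x ≤ g x + c) (hlower : ∀ z, g z < g x → f z ≤ g z + c) :
    f x ≤ g x + c := by
  obtain ⟨m, hm⟩ := hbdd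
  by_contra! hx
  obtain ⟨ε, hε, hεm⟩ := exists_pos_mul_lt (sub_pos.2 hx) (g x - m)
  refine hx.not_ge <| hT.le_add_of_slope_le hF_cone hf hg hfin hle hcrit
    (lt_add_of_pos_right 1 hε) fun z hz => ?_
  have : ε * (g x - g z) ≤ ε * (g x - m) :=
    mul_le_mul_of_nonneg_left (by linarith [hm ⟨z, rfl⟩]) hε.le
  linarith [hlower z hz]

variable [TopologicalSpace X]

theorem le_add_of_isCompact_sublevel (hT : IsDescentModulus_s0 F T)
    (hF_cone : ∀ f ∈ F, ∀ r : ℝ, 0 ≤ r → (fun x => r * f x) ∈ F)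
    (hf : f ∈ F) (hg : g ∈ F) (hf_cont : Continuous f) (hg_cont : Continuous g)
    (hfin : ∀ y, T g y ≠ ⊤) (hle : ∀ y, T f y ≤ T g y)
    (hcrit : ∀ y, T g y = 0 → f y ≤ g y + c) (hK : IsCompact {z | g z ≤ g x}) :
    f x ≤ g x + c := by
  obtain ⟨m, hm⟩ := bddBelow_range_of_isCompact_sublevel hg_cont hK
  by_contra! hx
  obtain ⟨ε, hε, hεm⟩ := exists_pos_mul_lt (sub_pos.2 hx) (g x - m)
  obtain ⟨y, hyK, hymax⟩ := hK.exists_isMaxOn ⟨x, le_refl (g x)⟩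
    (hf_cont.sub (continuous_const.mul hg_cont)).continuousOn (f := fun z => f z - (1 + ε) * g z)
  have hy : f y ≤ g y + c := by
    refine hT.le_add_of_slope_le hF_cone hf hg (hfin y) (hle y) (hcrit y)
      (lt_add_of_pos_right 1 hε) fun z hz => ?_
    linarith [isMaxOn_iff.1 hymax z (show g z ≤ g x from hz.le.trans hyK)]
  have hxy : f x - (1 + ε) * g x ≤ f y - (1 + ε) * g y := isMaxOn_iff.1 hymax x (le_refl (g x))
  have hmy : ε * m ≤ ε * g y := mul_le_mul_of_nonneg_left (hm ⟨y, rfl⟩) hε.le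
  linarith

theorem le_add_of_le (hT : IsDescentModulus_s0 F T)
    (hF_cont : ∀ f ∈ F, Continuous f)
    (hF_coercive : ∀ f ∈ F, ∀ α : ℝ, (∃ x, α < f x) → IsCompact {x | f x ≤ α})
    (hF_cone : ∀ f ∈ F, ∀ r : ℝ, 0 ≤ r → (fun x => r * f x) ∈ F) (hf : f ∈ F) (hg : g ∈ F)
    (hfin : ∀ y, T g y ≠ ⊤) (hle : ∀ y, T f y ≤ T g y)
    (hcrit : ∀ y, T g y = 0 → f y ≤ g y + c) (x : X) :
    f x ≤ g x + c := by
  by_cases hmin : ∀ z, g x ≤ g z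
  · exact hcrit x (hT.eq_zero_of_isMin g hg x hmin)
  push Not at hmin
  obtain ⟨z₀, hz₀⟩ := hmin
  refine hT.le_add_of_forall_lt hF_cone hf hg
    (bddBelow_range_of_isCompact_sublevel (hF_cont g hg) (hF_coercive g hg _ ⟨x, hz₀⟩))
    (hfin x) (hle x) (hcrit x) fun z hz => ?_
  exact hT.le_add_of_isCompact_sublevel hF_cone hf hg (hF_cont f hf) (hF_cont g hg) hfin hle
    hcrit (hF_coercive g hg _ ⟨x, hz⟩)

end IsDescentModulus_s0

end

theorem determination_of_continuous_coercive_functions_general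
    {X : Type*} [TopologicalSpace X]
    (F : Set (X → ℝ)) (T : (X → ℝ) → X → ENNReal)
    -- F ⊆ K(X): continuous and coercive
    (hF_cont : ∀ f ∈ F, Continuous f)
    (hF_coercive : ∀ f ∈ F, ∀ α : ℝ, (∃ x, α < f x) → IsCompact {x | f x ≤ α})
    -- F is a translation cone
    (hF_cone : ∀ f ∈ F, ∀ r : ℝ, 0 ≤ r → (fun x => r * f x) ∈ F)
    -- (D1) T preserves global minima
    (hD1 : ∀ f ∈ F, ∀ x : X, (∀ z, f x ≤ f z) → T f x = 0)
    -- (D2) T is monotone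
    (hD2 : ∀ f ∈ F, ∀ g ∈ F, ∀ x : X,
      (∀ z, max (g x - g z) 0 ≤ max (f x - f z) 0) → T g x ≤ T f x)
    -- (D3) T is scalar-monotone
    (hD3 : ∀ f ∈ F, ∀ x : X, ∀ r : ℝ, 1 < r → 0 < T f x → T f x < ⊤ →
      T f x < T (fun y => r * f y) x)
    (f g : X → ℝ) (hf : f ∈ F) (hg : g ∈ F)
    (hg_dom : ∀ x, T g x ≠ ⊤)
    (c : ℝ)
    (h_eq : ∀ x, T f x = T g x)
    (h_crit : ∀ x, T f x = 0 → f x = g x + c) :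
    ∀ x, f x = g x + c := by
  have hT : IsDescentModulus_s0 F T := ⟨hD1, hD2, hD3⟩
  have hle : ∀ x, f x ≤ g x + c :=
    hT.le_add_of_le hF_cont hF_coercive hF_cone hf hg hg_dom (fun x => (h_eq x).le)
      fun x hx => (h_crit x ((h_eq x).trans hx)).le
  have hge : ∀ x, g x ≤ f x + -c :=
    hT.le_add_of_le hF_cont hF_coercive hF_cone hg hf (fun x => h_eq x ▸ hg_dom x)
      (fun x => (h_eq x).ge) fun x hx => by linarith [h_crit x hx]
  intro x
  linarith [hle x, hge x]

/-- **Determination of continuous coercive functions.**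
Let `T` be a descent modulus for a translation cone `F` of continuous coercive
functions on a nonempty topological space `X`; if `f, g ∈ dom T` satisfy
`T[f] = T[g]` everywhere and `f = g + c` on the `T`-critical set of `f`, then
`f = g + c` everywhere. -/
theorem determination_of_continuous_coercive_functions
    {X : Type*} [TopologicalSpace X] [Nonempty X]
    (F : Set (X → ℝ)) (T : (X → ℝ) → X → ENNReal)
    -- F ⊆ K(X): continuous and coercive
    (hF_cont : ∀ f ∈ F, Continuous f)
    (hF_coercive : ∀ f ∈ F, ∀ α : ℝ, (∃ x, α < f x) → IsCompact {x | f x ≤ α})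
    -- F is a translation cone
    (hF_cone : ∀ f ∈ F, ∀ r : ℝ, 0 ≤ r → (fun x => r * f x) ∈ F)
    (hF_trans : ∀ f ∈ F, ∀ c : ℝ, (fun x => f x + c) ∈ F)
    -- (D1) T preserves global minima
    (hD1 : ∀ f ∈ F, ∀ x : X, (∀ z, f x ≤ f z) → T f x = 0)
    -- (D2) T is monotone
    (hD2 : ∀ f ∈ F, ∀ g ∈ F, ∀ x : X,
      (∀ z, max (g x - g z) 0 ≤ max (f x - f z) 0) → T g x ≤ T f x)
    -- (D3) T is scalar-monotone
    (hD3 : ∀ f ∈ F, ∀ x : X, ∀ r : ℝ, 1 < r → 0 < T f x → T f x < ⊤ →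
      T f x < T (fun y => r * f y) x)
    (f g : X → ℝ) (hf : f ∈ F) (hg : g ∈ F)
    (hf_dom : ∀ x, T f x ≠ ⊤) (hg_dom : ∀ x, T g x ≠ ⊤)
    (c : ℝ)
    (h_eq : ∀ x, T f x = T g x)
    (h_crit : ∀ x, T f x = 0 → f x = g x + c) :
    ∀ x, f x = g x + c :=
  determination_of_continuous_coercive_functions_general F T hF_cont hF_coercive hF_cone hD1 hD2 hD3
    f g hf hg hg_dom c h_eq h_crit
end

section
/- Let T be a descent modulus for a translation cone F of continuous coercive functions on a nonempty topological space X, and let f, g ∈ dom(T) and c ∈ ℝ be such that (i) T[f](x) ≥ T[g](x) for all x ∈ X, and (ii) f(x̄) ≥ g(x̄) + c for all x̄ in the T-critical set Z_T(f). Then f(x) ≥ g(x) + c for all x ∈ X. -/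
/-- **Comparison principle.**
Let `T` be a descent modulus for a translation cone `F` of continuous coercive
functions on a nonempty topological space `X`; if `f, g ∈ dom T` satisfy
`T[f] ≥ T[g]` everywhere and `f ≥ g + c` on the `T`-critical set of `f`, then
`f ≥ g + c` everywhere. -/
theorem comparison_principle_descent_modulus
    {X : Type*} [TopologicalSpace X] [Nonempty X]
    (F : Set (X → ℝ)) (T : (X → ℝ) → X → ENNReal)
    -- F ⊆ K(X): continuous and coercive
    (hF_cont : ∀ f ∈ F, Continuous f)
    (hF_coercive : ∀ f ∈ F, ∀ α : ℝ, (∃ x, α < f x) → IsCompact {x | f x ≤ α})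
    -- F is a translation cone
    (hF_cone : ∀ f ∈ F, ∀ r : ℝ, 0 ≤ r → (fun x => r * f x) ∈ F)
    (hF_trans : ∀ f ∈ F, ∀ c : ℝ, (fun x => f x + c) ∈ F)
    -- (D1) T preserves global minima
    (hD1 : ∀ f ∈ F, ∀ x : X, (∀ z, f x ≤ f z) → T f x = 0)
    -- (D2) T is monotone
    (hD2 : ∀ f ∈ F, ∀ g ∈ F, ∀ x : X,
      (∀ z, max (g x - g z) 0 ≤ max (f x - f z) 0) → T g x ≤ T f x)
    -- (D3) T is scalar-monotone
    (hD3 : ∀ f ∈ F, ∀ x : X, ∀ r : ℝ, 1 < r → 0 < T f x → T f x < ⊤ →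
      T f x < T (fun y => r * f y) x)
    (f g : X → ℝ) (hf : f ∈ F) (hg : g ∈ F)
    (hf_dom : ∀ x, T f x ≠ ⊤) (hg_dom : ∀ x, T g x ≠ ⊤)
    (c : ℝ)
    (h_ge : ∀ x, T g x ≤ T f x)
    (h_crit : ∀ x, T f x = 0 → g x + c ≤ f x) :
    ∀ x, g x + c ≤ f x := by
  classical
  -- trivial case: f is constant
  by_cases hconst : ∀ z w : X, f z ≤ f w
  · intro x
    exact h_crit x (hD1 f hf x (fun z => hconst x z))
  push_neg at hconst
  obtain ⟨x₂, x₁, hx12⟩ := hconst   -- f x₁ < f x₂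
  -- f attains its global minimum at some xm
  have hK1 : IsCompact {x | f x ≤ f x₁} := hF_coercive f hf (f x₁) ⟨x₂, hx12⟩
  obtain ⟨xm, hxmK, hxm⟩ :=
    hK1.exists_isMinOn ⟨x₁, le_refl (f x₁)⟩ ((hF_cont f hf).continuousOn)
  have hmin : ∀ z, f xm ≤ f z := by
    intro z
    by_cases hz : f z ≤ f x₁
    · exact isMinOn_iff.mp hxm z hz
    · have h1 : f xm ≤ f x₁ := isMinOn_iff.mp hxm x₁ (Set.mem_setOf_eq ▸ le_refl (f x₁))
      linarith [not_le.mp hz]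
  -- a general step: force T f to vanish at a point satisfying the D2 condition
  have step : ∀ (r : ℝ) (x : X), 1 < r →
      (∀ z, max (r * f x - r * f z) 0 ≤ max (g x - g z) 0) → g x + c ≤ f x := by
    intro r x hr1 hcond
    have h1 : T (fun y => r * f y) x ≤ T g x :=
      hD2 g hg _ (hF_cone f hf r (by linarith)) x hcond
    have h2 : T g x ≤ T f x := h_ge x
    have hTf0 : T f x = 0 := by
      by_contra hne
      have hpos : 0 < T f x := pos_iff_ne_zero.mpr hne
      have h3 := hD3 f hf x r hr1 hpos (lt_top_iff_ne_top.mpr (hf_dom x))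
      exact absurd (h3.trans_le (h1.trans h2)) (lt_irrefl _)
    exact h_crit x hTf0
  -- Key: the conclusion holds at every point that is not a global maximizer of f
  have key : ∀ x₀ : X, (∃ w, f x₀ < f w) → g x₀ + c ≤ f x₀ := by
    intro x₀ hw
    obtain ⟨w, hw⟩ := hw
    by_contra hlt
    push_neg at hlt
    set ε : ℝ := g x₀ + c - f x₀ with hεdef
    have hε0 : 0 < ε := by simp only [hεdef]; linarith
    have hd : 0 < f x₀ - f xm + 1 := by linarith [hmin x₀]
    set s : ℝ := ε / (f x₀ - f xm + 1) with hsdef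
    have hs0 : 0 < s := div_pos hε0 hd
    have hse : s * (f x₀ - f xm + 1) = ε := div_mul_cancel₀ ε (ne_of_gt hd)
    set r : ℝ := 1 + s with hrdef
    have hr1 : 1 < r := by simp only [hrdef]; linarith
    -- minimize r f - g on the compact sublevel set {f ≤ f x₀}
    have hK : IsCompact {x | f x ≤ f x₀} := hF_coercive f hf (f x₀) ⟨w, hw⟩
    have hcont : Continuous fun x => r * f x - g x :=
      (continuous_const.mul (hF_cont f hf)).sub (hF_cont g hg)
    obtain ⟨xb, hxbK, hxb⟩ := hK.exists_isMinOn ⟨x₀, le_refl (f x₀)⟩ hcont.continuousOn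
    have hxbK' : f xb ≤ f x₀ := hxbK
    -- the D2 condition at xb
    have hcond : ∀ z, max (r * f xb - r * f z) 0 ≤ max (g xb - g z) 0 := by
      intro z
      rcases le_or_gt (f xb) (f z) with h | h
      · have h0 : r * f xb - r * f z ≤ 0 := by nlinarith
        calc max (r * f xb - r * f z) 0 = 0 := max_eq_right h0
          _ ≤ max (g xb - g z) 0 := le_max_right _ _
      · have hzK : z ∈ {x | f x ≤ f x₀} := le_trans h.le hxbK'
        have hψ := isMinOn_iff.mp hxb z hzK
        have h2 : r * f xb - r * f z ≤ g xb - g z := by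
          linarith
        exact max_le_max h2 (le_refl 0)
    have hgc : g xb + c ≤ f xb := step r xb hr1 hcond
    -- xb minimizes r f - g over a set containing x₀
    have hψ0 := isMinOn_iff.mp hxb x₀ (Set.mem_setOf_eq ▸ le_refl (f x₀))
    -- derive the contradiction
    have hmb : f xm ≤ f xb := hmin xb
    -- from hψ0 and hgc : ε ≤ s * (f x₀ - f xb)
    have h3 : ε ≤ s * (f x₀ - f xb) := by nlinarith
    have h4 : s * (f x₀ - f xb) ≤ s * (f x₀ - f xm) := by nlinarith
    nlinarith
  -- now the general case
  intro x
  by_cases hmax : ∃ w, f x < f w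
  · exact key x hmax
  push_neg at hmax
  by_contra hlt
  push_neg at hlt
  set δ : ℝ := g x + c - f x with hδdef
  have hδ0 : 0 < δ := by simp only [hδdef]; linarith
  have hMm : f xm < f x := (hmin x₁).trans_lt (hx12.trans_le (hmax x₂))
  set s : ℝ := δ / (f x - f xm) with hsdef
  have hs0 : 0 < s := div_pos hδ0 (by linarith)
  have hse : s * (f x - f xm) = δ := div_mul_cancel₀ δ (by linarith)
  set r : ℝ := 1 + s with hrdef
  have hr1 : 1 < r := by simp only [hrdef]; linarith
  have hcond : ∀ z, max (r * f x - r * f z) 0 ≤ max (g x - g z) 0 := by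
    intro z
    rcases le_or_gt (f x) (f z) with h | h
    · have h0 : r * f x - r * f z ≤ 0 := by nlinarith
      calc max (r * f x - r * f z) 0 = 0 := max_eq_right h0
        _ ≤ max (g x - g z) 0 := le_max_right _ _
    · have hz : g z + c ≤ f z := key z ⟨x, h⟩
      have hzm : f xm ≤ f z := hmin z
      have h2 : r * f x - r * f z ≤ g x - g z := by nlinarith
      exact max_le_max h2 (le_refl 0)
  have hgc : g x + c ≤ f x := step r x hr1 hcond
  linarith
end

section
/- Let T be a descent modulus for a translation cone F of continuous coercive functions on a nonempty topological space X, and let f, g ∈ dom(T) satisfy T[f](x) > T[g](x) for every x ∈ X \ Z_T(f). Then for all x ∈ X one has f(x) ≥ g(x) + μ(x), where μ(x) := inf{ f(z) − g(z) : z ∈ [f ≤ f(x)] ∩ Z_T(f) } ∈ ℝ ∪ {−∞} (the set [f ≤ f(x)] ∩ Z_T(f) is nonempty, so μ(x) < +∞, and the inequality is understood in the extended reals). -/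
/-- A continuous coercive function attains its minimum on any nonempty closed set. -/
lemma coercive_exists_min {X : Type*} [TopologicalSpace X]
    (f : X → ℝ) (hcont : Continuous f)
    (hcoer : ∀ α : ℝ, (∃ x, α < f x) → IsCompact {x | f x ≤ α})
    (A : Set X) (hA : IsClosed A) (hne : A.Nonempty) :
    ∃ z ∈ A, ∀ y ∈ A, f z ≤ f y := by
  by_cases h : ∃ a ∈ A, ∃ y, f a < f y
  · obtain ⟨a, ha, y, hay⟩ := h
    have hK : IsCompact (A ∩ {x | f x ≤ f a}) :=
      (hcoer (f a) ⟨y, hay⟩).inter_left hA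
    have hKne : (A ∩ {x | f x ≤ f a}).Nonempty := ⟨a, ha, show f a ≤ f a from le_rfl⟩
    obtain ⟨z, hz, hzmin⟩ := hK.exists_isMinOn hKne hcont.continuousOn
    refine ⟨z, hz.1, fun w hw => ?_⟩
    by_cases hwa : f w ≤ f a
    · exact hzmin ⟨hw, hwa⟩
    · exact le_trans (hzmin ⟨ha, show f a ≤ f a from le_rfl⟩) (le_of_not_ge hwa)
  · push_neg at h
    obtain ⟨a, ha⟩ := hne
    exact ⟨a, ha, fun y hy => h y hy a⟩

/-- **Strict domination of descent modulus.**
If `T` is a descent modulus for a translation cone `F` of continuous coercive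
functions, `f, g ∈ dom T` and `T[f](x) > T[g](x)` at every non-`T`-critical
point of `f`, then for every `x` one has `f(x) ≥ g(x) + μ(x)` where
`μ(x) = inf {f(z) - g(z) : z ∈ [f ≤ f(x)] ∩ Z_T(f)}`, the set
`[f ≤ f(x)] ∩ Z_T(f)` being nonempty (so `μ(x) < +∞`); the inequality is
understood in the extended reals. -/
theorem strict_domination_of_descent_modulus
    {X : Type*} [TopologicalSpace X] [Nonempty X]
    (F : Set (X → ℝ)) (T : (X → ℝ) → X → ENNReal)
    -- F ⊆ K(X): continuous and coercive
    (hF_cont : ∀ f ∈ F, Continuous f)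
    (hF_coercive : ∀ f ∈ F, ∀ α : ℝ, (∃ x, α < f x) → IsCompact {x | f x ≤ α})
    -- F is a translation cone
    (hF_cone : ∀ f ∈ F, ∀ r : ℝ, 0 ≤ r → (fun x => r * f x) ∈ F)
    (hF_trans : ∀ f ∈ F, ∀ c : ℝ, (fun x => f x + c) ∈ F)
    -- (D1) T preserves global minima
    (hD1 : ∀ f ∈ F, ∀ x : X, (∀ z, f x ≤ f z) → T f x = 0)
    -- (D2) T is monotone
    (hD2 : ∀ f ∈ F, ∀ g ∈ F, ∀ x : X,
      (∀ z, max (g x - g z) 0 ≤ max (f x - f z) 0) → T g x ≤ T f x)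
    -- (D3) T is scalar-monotone
    (hD3 : ∀ f ∈ F, ∀ x : X, ∀ r : ℝ, 1 < r → 0 < T f x → T f x < ⊤ →
      T f x < T (fun y => r * f y) x)
    (f g : X → ℝ) (hf : f ∈ F) (hg : g ∈ F)
    (hf_dom : ∀ x, T f x ≠ ⊤) (hg_dom : ∀ x, T g x ≠ ⊤)
    (h_lt : ∀ x, T f x ≠ 0 → T g x < T f x) :
    ∀ x, ({z | f z ≤ f x} ∩ {z | T f z = 0}).Nonempty ∧
      (g x : EReal) +
        sInf ((fun z => ((f z - g z : ℝ) : EReal)) ''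
          ({z | f z ≤ f x} ∩ {z | T f z = 0})) ≤ (f x : EReal) := by
  intro x
  have hfc := hF_cont f hf
  have hgc := hF_cont g hg
  -- the closed set A
  set A : Set X := {z | f z ≤ f x} ∩ {z | f z - g z ≤ f x - g x} with hAdef
  have hAclosed : IsClosed A :=
    (isClosed_le hfc continuous_const).inter
      (isClosed_le (hfc.sub hgc) continuous_const)
  have hAne : A.Nonempty := ⟨x, show f x ≤ f x from le_rfl, show f x - g x ≤ f x - g x from le_rfl⟩
  obtain ⟨z, hzA, hzmin⟩ :=
    coercive_exists_min f hfc (hF_coercive f hf) A hAclosed hAne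
  -- z is T-critical for f
  have hzcrit : T f z = 0 := by
    by_contra hzc
    have h1 : T g z < T f z := h_lt z hzc
    have h2 : T f z ≤ T g z := by
      apply hD2 g hg f hf z
      intro w
      by_cases hw : f w < f z
      · have hwA : w ∉ A := fun hwA => absurd (hzmin w hwA) (not_le.mpr hw)
        have hwx : f w ≤ f x := le_trans hw.le hzA.1
        have hwg : f x - g x < f w - g w := by
          by_contra hcon
          exact hwA ⟨hwx, le_of_not_gt hcon⟩
        have hzx : f z - g z ≤ f x - g x := hzA.2
        refine max_le (le_trans (by linarith) (le_max_left _ _)) (le_max_right _ _)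
      · have : max (f z - f w) 0 = 0 := max_eq_right (by linarith [not_lt.mp hw])
        rw [this]
        exact le_max_right _ _
    exact absurd h2 (not_le.mpr h1)
  have hzmem : z ∈ {z | f z ≤ f x} ∩ {z | T f z = 0} := ⟨hzA.1, hzcrit⟩
  refine ⟨⟨z, hzmem⟩, ?_⟩
  have hinf : sInf ((fun z => ((f z - g z : ℝ) : EReal)) ''
      ({z | f z ≤ f x} ∩ {z | T f z = 0})) ≤ ((f z - g z : ℝ) : EReal) :=
    sInf_le ⟨z, hzmem, rfl⟩
  calc (g x : EReal) + sInf ((fun z => ((f z - g z : ℝ) : EReal)) ''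
        ({z | f z ≤ f x} ∩ {z | T f z = 0}))
      ≤ (g x : EReal) + ((f z - g z : ℝ) : EReal) := by
        exact add_le_add_right hinf _
    _ = ((g x + (f z - g z) : ℝ) : EReal) := by norm_cast
    _ ≤ (f x : EReal) := by
        have hz2 : f z - g z ≤ f x - g x := hzA.2
        have : g x + (f z - g z) ≤ f x := by linarith
        exact_mod_cast this
end

section
/- Let F be a family of functions from a nonempty set X to ℝ that is a translation cone (closed under multiplication by nonnegative scalars and under addition of real constants), let T assign to each f ∈ F a function T[f] : X → [0,+∞], let x ∈ X, and assume T is monotone at x (for all f, g ∈ F, if (f(x) − f(z))₊ ≥ (g(x) − g(z))₊ for every z ∈ X then T[f](x) ≥ T[g](x)). Then the following are equivalent: (c1) T is scalar-monotone at x, i.e., for every f ∈ F and r > 1, 0 < T[f](x) < +∞ implies T[f](x) < T[r·f](x); (c2) for every f, g ∈ F with T[f](x) > 0, T[g](x) < +∞ and [g ≤ g(x)] ⊆ [f ≤ f(x)], if there exists δ > 0 such that f(x) − f(z) ≥ (1+δ)(g(x) − g(z)) for all z ∈ [g ≤ g(x)], then T[f](x) > T[g](x); (c3) for every f ∈ F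 and r ∈ (1,+∞) with 0 < T[f](x) and T[r·f](x) < +∞, the map δ ↦ T[(1+δ)·f](x) is strictly increasing on [0, r−1]. -/
private lemma max_scale_le {c₁ c₂ a : ℝ} (h0 : 0 ≤ c₁) (h : c₁ ≤ c₂) :
    max (c₁ * a) 0 ≤ max (c₂ * a) 0 := by
  rcases le_total a 0 with ha | ha
  · have h1 : c₁ * a ≤ 0 := mul_nonpos_of_nonneg_of_nonpos h0 ha
    calc max (c₁ * a) 0 = 0 := max_eq_right h1
    _ ≤ max (c₂ * a) 0 := le_max_right _ _
  · exact max_le_max (by nlinarith) le_rfl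

/-- **Characterizations of scalar-monotonicity.**
If `T` is monotone at `x` on a translation cone `F` of real-valued functions,
then scalar-monotonicity at `x` (c1) is equivalent to each of the conditions
(c2) and (c3). -/
theorem scalar_monotone_equivalences
    {X : Type*} [Nonempty X]
    (F : Set (X → ℝ)) (T : (X → ℝ) → X → ENNReal)
    -- F is a translation cone
    (hF_cone : ∀ f ∈ F, ∀ r : ℝ, 0 ≤ r → (fun x => r * f x) ∈ F)
    (hF_trans : ∀ f ∈ F, ∀ c : ℝ, (fun x => f x + c) ∈ F)
    (x : X)
    -- T is monotone at x
    (hmono : ∀ f ∈ F, ∀ g ∈ F,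
      (∀ z, max (g x - g z) 0 ≤ max (f x - f z) 0) → T g x ≤ T f x) :
    -- (c1) ↔ (c2)
    ((∀ f ∈ F, ∀ r : ℝ, 1 < r → 0 < T f x → T f x < ⊤ →
        T f x < T (fun y => r * f y) x)
      ↔
      (∀ f ∈ F, ∀ g ∈ F, 0 < T f x → T g x < ⊤ →
        {z | g z ≤ g x} ⊆ {z | f z ≤ f x} →
        (∃ δ : ℝ, 0 < δ ∧ ∀ z, g z ≤ g x → (1 + δ) * (g x - g z) ≤ f x - f z) →
        T g x < T f x))
    ∧
    -- (c1) ↔ (c3)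
    ((∀ f ∈ F, ∀ r : ℝ, 1 < r → 0 < T f x → T f x < ⊤ →
        T f x < T (fun y => r * f y) x)
      ↔
      (∀ f ∈ F, ∀ r : ℝ, 1 < r → 0 < T f x → T (fun y => r * f y) x < ⊤ →
        StrictMonoOn (fun δ : ℝ => T (fun y => (1 + δ) * f y) x)
          (Set.Icc 0 (r - 1)))) := by
  constructor
  · constructor
    · -- c1 → c2
      rintro hc1 f hf g hg hTf hTg hsub ⟨δ, hδ, hineq⟩
      have hg' : (fun y => (1 + δ) * g y) ∈ F := hF_cone g hg _ (by linarith)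
      have h1 : T (fun y => (1 + δ) * g y) x ≤ T f x := by
        apply hmono f hf _ hg'
        intro z
        rcases le_total (g z) (g x) with h | h
        · have h2 : (1 + δ) * g x - (1 + δ) * g z ≤ f x - f z := by
            have := hineq z h; nlinarith
          exact max_le_max h2 le_rfl
        · have h3 : (1 + δ) * g x - (1 + δ) * g z ≤ 0 := by nlinarith
          calc max ((1 + δ) * g x - (1 + δ) * g z) 0 = 0 := max_eq_right h3
          _ ≤ max (f x - f z) 0 := le_max_right _ _
      rcases eq_or_lt_of_le (zero_le : 0 ≤ T g x) with hz | hzpos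
      · exact hz ▸ hTf
      · have h0 : T g x < T (fun y => (1 + δ) * g y) x :=
          hc1 g hg (1 + δ) (by linarith) hzpos hTg
        exact lt_of_lt_of_le h0 h1
    · -- c2 → c1
      intro hc2 f hf r hr hpos hlt
      have hrf : (fun y => r * f y) ∈ F := hF_cone f hf r (by linarith)
      have hle : T f x ≤ T (fun y => r * f y) x := by
        apply hmono _ hrf f hf
        intro z
        have := max_scale_le (c₁ := 1) (c₂ := r) (a := f x - f z)
          zero_le_one (le_of_lt hr)
        simpa [mul_sub] using this
      apply hc2 _ hrf f hf (lt_of_lt_of_le hpos hle) hlt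
      · intro z hz
        simp only [Set.mem_setOf_eq] at hz ⊢
        exact mul_le_mul_of_nonneg_left hz (by linarith)
      · exact ⟨r - 1, by linarith, fun z _ => by nlinarith⟩
  · constructor
    · -- c1 → c3
      intro hc1 f hf r hr hpos htop
      intro δ₁ h1 δ₂ h2 hlt12
      simp only [Set.mem_Icc] at h1 h2
      have hd1 : (0:ℝ) ≤ 1 + δ₁ := by linarith [h1.1]
      have hg' : (fun y => (1 + δ₁) * f y) ∈ F := hF_cone f hf _ hd1
      have hgpos : 0 < T (fun y => (1 + δ₁) * f y) x := by
        refine lt_of_lt_of_le hpos (hmono _ hg' f hf fun z => ?_)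
        have := max_scale_le (c₁ := 1) (c₂ := 1 + δ₁) (a := f x - f z)
          zero_le_one (by linarith [h1.1])
        simpa [mul_sub] using this
      have hgtop : T (fun y => (1 + δ₁) * f y) x < ⊤ := by
        refine lt_of_le_of_lt (hmono _ (hF_cone f hf r (by linarith)) _ hg'
          fun z => ?_) htop
        have := max_scale_le (c₁ := 1 + δ₁) (c₂ := r) (a := f x - f z)
          hd1 (by linarith [h2.2])
        simpa [mul_sub] using this
      set s : ℝ := (1 + δ₂) / (1 + δ₁) with hs
      have hd1pos : (0:ℝ) < 1 + δ₁ := by linarith [h1.1]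
      have hs1 : 1 < s := by
        rw [hs, lt_div_iff₀ hd1pos]; linarith
      have key := hc1 _ hg' s hs1 hgpos hgtop
      have heq : (fun y => s * ((1 + δ₁) * f y)) = (fun y => (1 + δ₂) * f y) := by
        funext y
        have h : s * (1 + δ₁) = 1 + δ₂ := div_mul_cancel₀ _ (ne_of_gt hd1pos)
        rw [← h]; ring
      rw [heq] at key
      exact key
    · -- c3 → c1
      intro hc3 f hf r hr hpos hlt
      by_cases htop : T (fun y => r * f y) x = ⊤
      · rw [htop]; exact hlt
      · have := hc3 f hf r hr hpos (lt_top_iff_ne_top.mpr htop)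
        have key := this (a := 0) (b := r - 1)
          ⟨le_refl 0, by linarith⟩ ⟨by linarith, le_refl _⟩ (by linarith)
        have e1 : (fun y => (1 + (0:ℝ)) * f y) = f := by funext y; ring
        have e2 : (fun y => (1 + (r - 1)) * f y) = (fun y => r * f y) := by
          funext y; ring
        simpa [e1, e2] using key
end

section
/- Let X be a nonempty topological space, let F be a translation cone of continuous functions f : X → ℝ, and let m : X × X → [0,+∞) satisfy the separation axiom m(x,y) = 0 if and only if x = y. Define, for f ∈ F, the m-slope s_f(x) := limsup_{y → x, y ≠ x} (f(x) − f(y))₊ / m(x,y) if x is not an isolated point of X, and s_f(x) := 0 if x is isolated. Then the operator f ↦ s_f is a descent modulus for F: it preserves global minima (s_f(x) = 0 whenever x is a global minimizer of f), is monotone (if (f(x) − f(z))₊ ≥ (g(x) − g(z))₊ for all z ∈ X then s_f(x) ≥ s_g(x)), and is scalar-monotone (if r > 1 and 0 < s_f(x) < +∞ then s_f(x) < s_{r·f}(x)). -/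
open Filter Topology

open Classical in
/-- The `m`-slope of `f` at `x`: `limsup_{y → x} (f(x) - f(y))₊ / m(x,y)` over the
punctured neighborhood filter when `x` is not isolated, and `0` otherwise. -/
noncomputable def mSlope {X : Type*} [TopologicalSpace X] (m : X → X → ℝ)
    (f : X → ℝ) (x : X) : ENNReal :=
  if (𝓝[≠] x).NeBot then
    Filter.limsup (fun y => ENNReal.ofReal (max (f x - f y) 0 / m x y)) (𝓝[≠] x)
  else 0

/-- **The `m`-slope is a descent modulus.**
For a separating weight `m` on a nonempty topological space `X`, and any
translation cone `F` of continuous functions, the `m`-slope `f ↦ s_f`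
preserves global minima, is monotone, and is scalar-monotone. -/
theorem mSlope_is_descent_modulus
    {X : Type*} [TopologicalSpace X] [Nonempty X]
    (F : Set (X → ℝ))
    (hF_cont : ∀ f ∈ F, Continuous f)
    -- F is a translation cone
    (hF_cone : ∀ f ∈ F, ∀ r : ℝ, 0 ≤ r → (fun x => r * f x) ∈ F)
    (hF_trans : ∀ f ∈ F, ∀ c : ℝ, (fun x => f x + c) ∈ F)
    (m : X → X → ℝ)
    (hm_nonneg : ∀ x y, 0 ≤ m x y)
    (hm_sep : ∀ x y, m x y = 0 ↔ x = y) :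
    -- (D1) preservation of global minima
    (∀ f ∈ F, ∀ x : X, (∀ z, f x ≤ f z) → mSlope m f x = 0) ∧
    -- (D2) monotonicity
    (∀ f ∈ F, ∀ g ∈ F, ∀ x : X,
      (∀ z, max (g x - g z) 0 ≤ max (f x - f z) 0) →
      mSlope m g x ≤ mSlope m f x) ∧
    -- (D3) scalar-monotonicity
    (∀ f ∈ F, ∀ x : X, ∀ r : ℝ, 1 < r → 0 < mSlope m f x → mSlope m f x < ⊤ →
      mSlope m f x < mSlope m (fun y => r * f y) x) := by
  classical
  refine ⟨?_, ?_, ?_⟩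
  · intro f hf x hmin
    unfold mSlope
    split_ifs with h
    · have : (fun y => ENNReal.ofReal (max (f x - f y) 0 / m x y)) = fun _ => 0 := by
        funext y
        have : max (f x - f y) 0 = 0 := max_eq_right (by linarith [hmin y])
        simp [this]
      rw [this, limsup_const]
    · rfl
  · intro f hf g hg x hmono
    unfold mSlope
    split_ifs with h
    · refine Filter.limsup_le_limsup ?_
      refine Filter.Eventually.of_forall fun y => ?_
      rcases (hm_nonneg x y).eq_or_lt with hm | hm
      · simp [← hm]
      · exact ENNReal.ofReal_le_ofReal (div_le_div_of_nonneg_right (hmono y) hm.le)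
    · exact le_refl _
  · intro f hf x r hr hpos hlt
    unfold mSlope at *
    split_ifs at * with h
    · have hr0 : (0:ℝ) ≤ r := by linarith
      have key : (fun y => ENNReal.ofReal (max (r * f x - r * f y) 0 / m x y))
          = fun y => ENNReal.ofReal r * ENNReal.ofReal (max (f x - f y) 0 / m x y) := by
        funext y
        have h1 : max (r * f x - r * f y) 0 = r * max (f x - f y) 0 := by
          rw [← mul_sub]
          rw [max_def, max_def]
          split_ifs with h2 h3 h3 <;> nlinarith
        rw [h1, mul_div_assoc, ← ENNReal.ofReal_mul hr0]
      rw [key, ENNReal.limsup_const_mul_of_ne_top (by simp)]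
      calc Filter.limsup (fun y => ENNReal.ofReal (max (f x - f y) 0 / m x y)) (𝓝[≠] x)
          = 1 * Filter.limsup (fun y => ENNReal.ofReal (max (f x - f y) 0 / m x y)) (𝓝[≠] x) := by
            rw [one_mul]
        _ < ENNReal.ofReal r * Filter.limsup
              (fun y => ENNReal.ofReal (max (f x - f y) 0 / m x y)) (𝓝[≠] x) := by
            apply ENNReal.mul_lt_mul_left (ne_of_gt hpos) hlt.ne
            · exact ENNReal.one_lt_ofReal.mpr hr
    · exact absurd hpos (by simp)
end

section
/- Let T be a descent modulus for a translation cone F of functions from a nonempty set X to ℝ, and let φ : [0,+∞) → [0,+∞) be strictly increasing with φ(0) = 0 and limsup_{t→+∞} φ(t) = +∞. Then the operator φT, defined by (φT)[f](x) := φ(T[f](x)) with the convention φ(+∞) = +∞, is also a descent modulus for F. In particular, for every r > 0 the operator rT, defined by (rT)[f](x) := r·T[f](x) with the convention r·(+∞) = +∞, is a descent modulus for F. -/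
/-- `F` is a translation cone: closed under multiplication by nonnegative
scalars and under addition of real constants. -/
def IsTranslationCone {X : Type*} (F : Set (X → ℝ)) : Prop :=
  (∀ f ∈ F, ∀ r : ℝ, 0 ≤ r → (fun x => r * f x) ∈ F) ∧
  (∀ f ∈ F, ∀ c : ℝ, (fun x => f x + c) ∈ F)

/-- `T` is a descent modulus for the class `F`: it preserves global minima
(D1), is monotone (D2) and is scalar-monotone (D3). -/
def IsDescentModulus {X : Type*} (F : Set (X → ℝ))
    (T : (X → ℝ) → X → ENNReal) : Prop :=
  (∀ f ∈ F, ∀ x : X, (∀ z, f x ≤ f z) → T f x = 0) ∧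
  (∀ f ∈ F, ∀ g ∈ F, ∀ x : X,
    (∀ z, max (g x - g z) 0 ≤ max (f x - f z) 0) → T g x ≤ T f x) ∧
  (∀ f ∈ F, ∀ x : X, ∀ r : ℝ, 1 < r → 0 < T f x → T f x < ⊤ →
    T f x < T (fun y => r * f y) x)

/-- **Composition with a strictly increasing function.**
If `T` is a descent modulus for a translation cone `F` and
`φ : [0,∞) → [0,∞)` is strictly increasing with `φ(0) = 0` and
`limsup_{t→+∞} φ(t) = +∞`, then `φT` (with the convention `φ(+∞) = +∞`) is a
descent modulus for `F`; in particular so is `rT` for every `r > 0` (with the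
convention `r·(+∞) = +∞`). -/
theorem comp_descent_modulus
    {X : Type*} [Nonempty X]
    (F : Set (X → ℝ)) (hF : IsTranslationCone F)
    (T : (X → ℝ) → X → ENNReal) (hT : IsDescentModulus F T)
    (φ : ℝ → ℝ)
    (hφ_mono : StrictMonoOn φ (Set.Ici 0))
    (hφ_nonneg : ∀ t, 0 ≤ t → 0 ≤ φ t)
    (hφ_zero : φ 0 = 0)
    (hφ_top : Filter.limsup (fun t : ℝ => (φ t : EReal)) Filter.atTop = ⊤) :
    IsDescentModulus F (fun f x =>
      if T f x = ⊤ then ⊤ else ENNReal.ofReal (φ (T f x).toReal)) ∧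
    (∀ r : ℝ, 0 < r →
      IsDescentModulus F (fun f x => ENNReal.ofReal r * T f x)) := by
  obtain ⟨hT1, hT2, hT3⟩ := hT
  -- key strict monotonicity of the composition
  have key : ∀ a b : ENNReal, a ≠ ⊤ → a < b →
      (if a = ⊤ then ⊤ else ENNReal.ofReal (φ a.toReal)) <
      (if b = ⊤ then ⊤ else ENNReal.ofReal (φ b.toReal)) := by
    intro a b ha hab
    rw [if_neg ha]
    by_cases hb : b = ⊤
    · rw [if_pos hb]; exact ENNReal.ofReal_lt_top.trans_le le_top
    · rw [if_neg hb]
      have hlt : a.toReal < b.toReal :=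
        (ENNReal.toReal_lt_toReal ha hb).mpr hab
      have hφlt : φ a.toReal < φ b.toReal :=
        hφ_mono (ENNReal.toReal_nonneg) (ENNReal.toReal_nonneg) hlt
      exact (ENNReal.ofReal_lt_ofReal_iff
        (lt_of_le_of_lt (hφ_nonneg _ ENNReal.toReal_nonneg) hφlt)).mpr hφlt
  constructor
  · refine ⟨?_, ?_, ?_⟩
    · intro f hf x hx
      simp only
      rw [hT1 f hf x hx]
      simp [hφ_zero]
    · intro f hf g hg x hle
      have h := hT2 f hf g hg x hle
      simp only
      by_cases hfx : T f x = ⊤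
      · rw [if_pos hfx]; exact le_top
      · have hgx : T g x ≠ ⊤ := fun h' => hfx (top_le_iff.mp (h' ▸ h))
        rw [if_neg hfx, if_neg hgx]
        have hlt : (T g x).toReal ≤ (T f x).toReal :=
          (ENNReal.toReal_le_toReal hgx hfx).mpr h
        exact ENNReal.ofReal_le_ofReal
          (hφ_mono.monotoneOn ENNReal.toReal_nonneg ENNReal.toReal_nonneg hlt)
    · intro f hf x r hr hpos htop
      simp only at hpos htop ⊢
      by_cases hfx : T f x = ⊤
      · rw [if_pos hfx] at htop; exact absurd htop (lt_irrefl _)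
      · rw [if_neg hfx] at hpos
        have hφpos : 0 < φ (T f x).toReal := by
          by_contra hc
          push_neg at hc
          simp [ENNReal.ofReal_eq_zero.mpr hc] at hpos
        have htpos : 0 < (T f x).toReal := by
          rcases lt_or_eq_of_le (ENNReal.toReal_nonneg : (0:ℝ) ≤ (T f x).toReal) with h | h
          · exact h
          · rw [← h, hφ_zero] at hφpos; exact absurd hφpos (lt_irrefl _)
        have hTpos : 0 < T f x := by
          rcases (eq_or_ne (T f x) 0) with h | h
          · rw [h] at htpos; simp at htpos
          · exact pos_iff_ne_zero.mpr h
        exact key _ _ hfx (hT3 f hf x r hr hTpos (lt_top_iff_ne_top.mpr hfx))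
  · intro r hr
    have hr0 : ENNReal.ofReal r ≠ 0 := by
      simp [ENNReal.ofReal_eq_zero, not_le, hr]
    have hrt : ENNReal.ofReal r ≠ ⊤ := ENNReal.ofReal_ne_top
    refine ⟨?_, ?_, ?_⟩
    · intro f hf x hx
      simp [hT1 f hf x hx]
    · intro f hf g hg x hle
      exact mul_le_mul_right (hT2 f hf g hg x hle) _
    · intro f hf x s hs hpos htop
      simp only at hpos htop
      have hTpos : 0 < T f x := by
        rcases (eq_or_ne (T f x) 0) with h | h
        · simp [h] at hpos
        · exact pos_iff_ne_zero.mpr h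
      have hTtop : T f x < ⊤ := by
        rcases (eq_or_ne (T f x) ⊤) with h | h
        · rw [h, ENNReal.mul_top hr0] at htop; exact absurd htop (lt_irrefl _)
        · exact lt_top_iff_ne_top.mpr h
      exact (ENNReal.mul_lt_mul_iff_right hr0 hrt).mpr (hT3 f hf x s hs hTpos hTtop)
end

section
/- Let T be a descent modulus for a translation cone F of functions from a nonempty set X to ℝ, and let ε > 0. Then the truncated operator T_ε, defined by T_ε[f](x) := T[f](x) if f(x) > inf f + ε and T_ε[f](x) := 0 otherwise (with inf f taken in ℝ ∪ {−∞}), is also a descent modulus for F. -/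
open scoped Classical

lemma key_trunc {X : Type*} [Nonempty X] (f : X → ℝ) (x : X) (ε : ℝ) :
    (⨅ y, (f y : EReal)) + (ε : EReal) < (f x : EReal) ↔ ∃ z, f z + ε < f x := by
  constructor
  · intro h
    have h2 : (⨅ y, (f y : EReal)) < ((f x - ε : ℝ) : EReal) := by
      have : ((f x : ℝ) : EReal) = ((f x - ε : ℝ) : EReal) + (ε : EReal) := by
        rw [← EReal.coe_add]; norm_num
      rw [this] at h
      exact lt_of_add_lt_add_right h
    obtain ⟨z, hz⟩ := iInf_lt_iff.mp h2
    exact ⟨z, by have := EReal.coe_lt_coe_iff.mp hz; linarith⟩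
  · rintro ⟨z, hz⟩
    calc (⨅ y, (f y : EReal)) + (ε : EReal) ≤ (f z : EReal) + ε :=
          add_le_add_left (iInf_le _ z) _
      _ < (f x : EReal) := by
          rw [← EReal.coe_add]; exact_mod_cast hz

/-- **Truncated descents (value truncation).**
If `T` is a descent modulus for a translation cone `F` on a nonempty set `X`
and `ε > 0`, then the operator `T_ε`, equal to `T[f](x)` when
`f(x) > inf f + ε` (the infimum taken in `ℝ ∪ {-∞}`) and to `0` otherwise, is
also a descent modulus for `F`. -/
theorem truncated_descent_modulus
    {X : Type*} [Nonempty X]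
    (F : Set (X → ℝ)) (hF : IsTranslationCone F)
    (T : (X → ℝ) → X → ENNReal) (hT : IsDescentModulus F T)
    (ε : ℝ) (hε : 0 < ε) :
    IsDescentModulus F (fun f x =>
      if (⨅ y, (f y : EReal)) + (ε : EReal) < (f x : EReal) then T f x else 0) := by
  obtain ⟨hD1, hD2, hD3⟩ := hT
  refine ⟨?_, ?_, ?_⟩
  · intro f hf x hx
    simp only
    split_ifs with h
    · exact hD1 f hf x hx
    · rfl
  · intro f hf g hg x hmax
    simp only
    split_ifs with hgc hfc hfc
    · exact hD2 f hf g hg x hmax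
    · exfalso
      obtain ⟨z, hz⟩ := (key_trunc g x ε).mp hgc
      apply hfc
      rw [key_trunc]
      refine ⟨z, ?_⟩
      have h1 : max (g x - g z) 0 ≤ max (f x - f z) 0 := hmax z
      have h2 : ε < g x - g z := by linarith
      have : g x - g z ≤ max (f x - f z) 0 := le_trans (le_max_left _ _) h1
      have : ε < max (f x - f z) 0 := lt_of_lt_of_le h2 this
      rcases le_or_gt (f x - f z) 0 with h | h
      · rw [max_eq_right h] at this; linarith
      · rw [max_eq_left h.le] at this; linarith
    · exact zero_le
    · exact le_refl _
  · intro f hf x r hr hpos hlt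
    simp only at hpos hlt ⊢
    split_ifs at hpos hlt with hfc
    · have hrc : (⨅ y, ((r * f y : ℝ) : EReal)) + (ε : EReal) < ((r * f x : ℝ) : EReal) := by
        rw [key_trunc]
        obtain ⟨z, hz⟩ := (key_trunc f x ε).mp hfc
        exact ⟨z, by nlinarith⟩
      rw [if_pos hfc, if_pos hrc]
      exact hD3 f hf x r hr hpos hlt
    · exact absurd hpos (lt_irrefl 0)
end

section
/- Let (Λ,≼) be a directed set, p ∈ (0,+∞), and (T_α)_{α∈Λ} a family of descent moduli for a translation cone F of functions from a nonempty set X to ℝ, each of which is p-superhomogeneous, i.e. T_α[r·f](x) ≥ r^p·T_α[f](x) for all f ∈ F, x ∈ X and r > 0. Then each of the following pointwise operators is a descent modulus for F: (i) (limsup_α T_α)[f](x) := limsup_{α∈Λ} T_α[f](x); (ii) (sup_α T_α)[f](x) := sup_{α∈Λ} T_α[f](x); (iii) (liminf_α T_α)[f](x) := liminf_{α∈Λ} T_α[f](x); (iv) (inf_α T_α)[f](x) := inf_{α∈Λ} T_α[f](x). -/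
/-- Multiplication by a finite nonzero constant is an order isomorphism of
`ℝ≥0∞`, hence commutes with `liminf`. -/
lemma liminf_const_mul_of_ne {α : Type*} {f : Filter α} {u : α → ENNReal}
    {a : ENNReal} (ha0 : a ≠ 0) (ha_top : a ≠ ⊤) :
    (f.liminf fun x => a * u x) = a * f.liminf u := by
  let g := fun x : ENNReal => a * x
  have hg_bij : Function.Bijective g :=
    Function.bijective_iff_has_inverse.mpr
      ⟨fun x => a⁻¹ * x,
        ⟨fun x => by simp [g, ← mul_assoc, ENNReal.inv_mul_cancel ha0 ha_top], fun x => by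
          simp [g, ← mul_assoc, ENNReal.mul_inv_cancel ha0 ha_top]⟩⟩
  have hg_mono : StrictMono g :=
    Monotone.strictMono_of_injective
      (fun _ _ h => by rwa [ENNReal.mul_le_mul_iff_right ha0 ha_top]) hg_bij.1
  let g_iso := StrictMono.orderIsoOfSurjective g hg_mono hg_bij.2
  exact (OrderIso.liminf_apply g_iso).symm

/-- Abstract combination lemma: any pointwise "limit operation" `S` which
kills the constant-zero family, is monotone, and super-commutes with
multiplication by finite constants, turns a family of `p`-superhomogeneous
descent moduli into a descent modulus. -/
lemma descent_of_combiner
    {X : Type*} {Λ : Type*}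
    (F : Set (X → ℝ))
    (p : ℝ) (hp : 0 < p)
    (T : Λ → (X → ℝ) → X → ENNReal)
    (hT : ∀ α, IsDescentModulus F (T α))
    (hsuper : ∀ α, ∀ f ∈ F, ∀ x : X, ∀ r : ℝ, 0 < r →
      ENNReal.ofReal (r ^ p) * T α f x ≤ T α (fun y => r * f y) x)
    (S : (Λ → ENNReal) → ENNReal)
    (h0 : S (fun _ => 0) = 0)
    (hmono : ∀ u v : Λ → ENNReal, (∀ α, u α ≤ v α) → S u ≤ S v)
    (hmul : ∀ (c : ENNReal), c ≠ 0 → c ≠ ⊤ → ∀ u : Λ → ENNReal,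
      c * S u ≤ S (fun α => c * u α)) :
    IsDescentModulus F (fun f x => S (fun α => T α f x)) := by
  refine ⟨?_, ?_, ?_⟩
  · intro f hf x hx
    have : (fun α => T α f x) = fun _ => 0 := by
      funext α; exact (hT α).1 f hf x hx
    show S (fun α => T α f x) = 0
    rw [this, h0]
  · intro f hf g hg x h
    exact hmono _ _ fun α => (hT α).2.1 f hf g hg x h
  · intro f hf x r hr h0' htop
    have hrp : (1 : ℝ) < r ^ p :=
      Real.one_lt_rpow_iff_of_pos (lt_trans one_pos hr) |>.2 (Or.inl ⟨hr, hp⟩)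
    set c := ENNReal.ofReal (r ^ p) with hc
    have hc1 : (1 : ENNReal) < c := by
      rw [hc, ← ENNReal.ofReal_one]
      exact ENNReal.ofReal_lt_ofReal_iff (lt_trans one_pos hrp) |>.2 hrp
    have hc0 : c ≠ 0 := by positivity
    have hctop : c ≠ ⊤ := ENNReal.ofReal_ne_top
    calc S (fun α => T α f x) < c * S (fun α => T α f x) := by
          nth_rewrite 1 [← one_mul (S (fun α => T α f x))]
          exact (ENNReal.mul_lt_mul_iff_left h0'.ne' htop.ne).2 hc1
      _ ≤ S (fun α => c * T α f x) := hmul c hc0 hctop _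
      _ ≤ S (fun α => T α (fun y => r * f y) x) :=
          hmono _ _ fun α => hsuper α f hf x r (lt_trans one_pos hr)

/-- **Limits of `p`-superhomogeneous descent moduli.**
Given a directed set `Λ`, `p ∈ (0,∞)` and a generalized sequence
`(T_α)_{α ∈ Λ}` of `p`-superhomogeneous descent moduli for a translation cone
`F` on a nonempty set `X`, the pointwise `limsup`, `sup`, `liminf` and `inf`
of the family are again descent moduli for `F`. -/
theorem limits_of_superhomogeneous_descent_moduli
    {X : Type*} [Nonempty X]
    {Λ : Type*} [Nonempty Λ] [Preorder Λ] [IsDirected Λ (· ≤ ·)]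
    (F : Set (X → ℝ)) (hF : IsTranslationCone F)
    (p : ℝ) (hp : 0 < p)
    (T : Λ → (X → ℝ) → X → ENNReal)
    (hT : ∀ α, IsDescentModulus F (T α))
    -- each `T α` is p-superhomogeneous
    (hsuper : ∀ α, ∀ f ∈ F, ∀ x : X, ∀ r : ℝ, 0 < r →
      ENNReal.ofReal (r ^ p) * T α f x ≤ T α (fun y => r * f y) x) :
    IsDescentModulus F
      (fun f x => Filter.limsup (fun α => T α f x) Filter.atTop) ∧
    IsDescentModulus F (fun f x => ⨆ α, T α f x) ∧
    IsDescentModulus F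
      (fun f x => Filter.liminf (fun α => T α f x) Filter.atTop) ∧
    IsDescentModulus F (fun f x => ⨅ α, T α f x) := by
  have hbot : (Filter.atTop : Filter Λ).NeBot := Filter.atTop_neBot
  refine ⟨?_, ?_, ?_, ?_⟩
  · exact descent_of_combiner F p hp T hT hsuper _
      (by simpa using Filter.limsup_const (f := (Filter.atTop : Filter Λ)) (0 : ENNReal))
      (fun u v h => Filter.limsup_le_limsup (Filter.Eventually.of_forall h))
      (fun c hc0 hctop u =>
        (ENNReal.limsup_const_mul_of_ne_top hctop (u := u) (f := Filter.atTop)).symm.le)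
  · exact descent_of_combiner F p hp T hT hsuper _
      (by simp)
      (fun u v h => iSup_mono h)
      (fun c hc0 hctop u => (ENNReal.mul_iSup c u).le)
  · exact descent_of_combiner F p hp T hT hsuper _
      (by simpa using Filter.liminf_const (f := (Filter.atTop : Filter Λ)) (0 : ENNReal))
      (fun u v h => Filter.liminf_le_liminf (Filter.Eventually.of_forall h))
      (fun c hc0 hctop u =>
        (liminf_const_mul_of_ne hc0 hctop (u := u) (f := Filter.atTop)).symm.le)
  · exact descent_of_combiner F p hp T hT hsuper _
      (by simp)
      (fun u v h => iInf_mono h)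
      (fun c hc0 hctop u =>
        le_iInf fun α => (mul_le_mul_right (iInf_le _ α) c))
end

section
/- For every integer k ≥ 1, every r > 0 and every vector V ∈ ℝ^k, one has ‖V‖² = (k / λ_k(B_k(0,r))) · ∫_{B_k(0,r)} ⟨V, u/‖u‖⟩² du, where λ_k is the k-dimensional Lebesgue measure, B_k(0,r) is the open Euclidean ball of radius r centered at the origin, and the integrand is taken to be 0 at u = 0. -/
open MeasureTheory Finset
open scoped RealInnerProductSpace

lemma abs_coord_le_norm {k : ℕ} (u : EuclideanSpace ℝ (Fin k)) (i : Fin k) : |u i| ≤ ‖u‖ := by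
  have h1 : ⟪EuclideanSpace.single i (1:ℝ), u⟫ = u i := by
    simp [EuclideanSpace.inner_single_left]
  calc |u i| = |⟪EuclideanSpace.single i (1:ℝ), u⟫| := by rw [h1]
    _ ≤ ‖EuclideanSpace.single i (1:ℝ)‖ * ‖u‖ := abs_real_inner_le_norm _ _
    _ = ‖u‖ := by simp [EuclideanSpace.norm_single]

lemma setIntegral_comp_isometry {k : ℕ} (r : ℝ)
    (e : EuclideanSpace ℝ (Fin k) ≃ₗᵢ[ℝ] EuclideanSpace ℝ (Fin k))
    (f : EuclideanSpace ℝ (Fin k) → ℝ) :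
    ∫ u in Metric.ball (0 : EuclideanSpace ℝ (Fin k)) r, f (e u)
      = ∫ u in Metric.ball (0 : EuclideanSpace ℝ (Fin k)) r, f u := by
  have hpre : e ⁻¹' Metric.ball 0 r = Metric.ball 0 r := by
    ext u
    simp [Metric.mem_ball, dist_zero_right]
  have h := (e.measurePreserving).setIntegral_preimage_emb
    e.toHomeomorph.measurableEmbedding f (Metric.ball 0 r)
  rw [hpre] at h
  exact h

lemma neg_coord_apply {k : ℕ} (i : Fin k) (u : EuclideanSpace ℝ (Fin k)) (l : Fin k) :
    (LinearIsometryEquiv.piLpCongrRight 2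
      (fun l : Fin k => if l = i then LinearIsometryEquiv.neg ℝ else LinearIsometryEquiv.refl ℝ ℝ) u) l
      = if l = i then -(u l) else u l := by
  simp only [LinearIsometryEquiv.piLpCongrRight_apply]
  split <;> simp

lemma swap_coord_apply {k : ℕ} (i j : Fin k) (u : EuclideanSpace ℝ (Fin k)) (l : Fin k) :
    (LinearIsometryEquiv.piLpCongrLeft 2 ℝ ℝ (Equiv.swap i j) u) l = u (Equiv.swap i j l) := by
  simp [LinearIsometryEquiv.piLpCongrLeft_apply, Equiv.piCongrLeft'_apply]

/-- **Mean of squared projections on a ball.**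
For any `k ≥ 1`, `r > 0` and `V ∈ ℝ^k`:
`‖V‖² = (k / λ_k(B_k(0,r))) ∫_{B_k(0,r)} ⟨V, u/‖u‖⟩² du`
(the integrand vanishing at `u = 0`, since `0/‖0‖ = 0`). -/
theorem norm_sq_eq_average_inner_sq
    {k : ℕ} (hk : 1 ≤ k) (r : ℝ) (hr : 0 < r)
    (V : EuclideanSpace ℝ (Fin k)) :
    ‖V‖ ^ 2 =
      ((k : ℝ) / (volume (Metric.ball (0 : EuclideanSpace ℝ (Fin k)) r)).toReal) *
        ∫ u in Metric.ball (0 : EuclideanSpace ℝ (Fin k)) r,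
          ⟪V, ‖u‖⁻¹ • u⟫ ^ 2 := by
  haveI : Nontrivial (EuclideanSpace ℝ (Fin k)) :=
    ⟨0, EuclideanSpace.single ⟨0, hk⟩ (1:ℝ), by
      intro h
      have := congrArg (fun v : EuclideanSpace ℝ (Fin k) => v ⟨0, hk⟩) h.symm
      simp [EuclideanSpace.single_apply] at this⟩
  set B := Metric.ball (0 : EuclideanSpace ℝ (Fin k)) r with hB
  set g : Fin k → Fin k → EuclideanSpace ℝ (Fin k) → ℝ :=
    fun i j u => ‖u‖⁻¹ ^ 2 * (u i * u j) with hg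
  set i₀ : Fin k := ⟨0, hk⟩ with hi₀
  -- measurability
  have hcoord : ∀ i : Fin k, Measurable fun u : EuclideanSpace ℝ (Fin k) => u i :=
    fun i => (EuclideanSpace.proj i).continuous.measurable
  have hmeas : ∀ i j, Measurable (g i j) := fun i j =>
    ((measurable_norm.inv).pow_const 2).mul ((hcoord i).mul (hcoord j))
  -- boundedness
  have hbound : ∀ i j u, |g i j u| ≤ 1 := by
    intro i j u
    rcases eq_or_ne u 0 with rfl | hu
    · simp [hg]
    · have hn : (0:ℝ) < ‖u‖ := norm_pos_iff.2 hu
      calc |g i j u| = ‖u‖⁻¹ ^ 2 * (|u i| * |u j|) := by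
            rw [hg]; rw [abs_mul, abs_pow, abs_inv, abs_norm, abs_mul]
        _ ≤ ‖u‖⁻¹ ^ 2 * (‖u‖ * ‖u‖) := by
            gcongr
            · exact abs_coord_le_norm u i
            · exact abs_coord_le_norm u j
        _ = 1 := by rw [← sq]; field_simp
  -- integrability
  have hInt : ∀ i j, IntegrableOn (g i j) B := by
    intro i j
    refine Integrable.mono' (g := fun _ => (1:ℝ))
      (integrableOn_const measure_ball_lt_top.ne)
      (hmeas i j).aestronglyMeasurable ?_
    filter_upwards with u
    simpa [Real.norm_eq_abs] using hbound i j u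
  -- off-diagonal integrals vanish
  have hJzero : ∀ i j, j ≠ i → (∫ u in B, g i j u) = 0 := by
    intro i j hij
    set e := LinearIsometryEquiv.piLpCongrRight 2
      (fun l : Fin k => if l = i then LinearIsometryEquiv.neg ℝ else LinearIsometryEquiv.refl ℝ ℝ)
      with he
    have hcomp := setIntegral_comp_isometry r e (g i j)
    have hneg : ∀ u, g i j (e u) = - g i j u := by
      intro u
      have h1 : (e u) i = -(u i) := by rw [he, neg_coord_apply]; simp
      have h2 : (e u) j = u j := by rw [he, neg_coord_apply]; simp [hij]
      have h3 : ‖e u‖ = ‖u‖ := e.norm_map u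
      simp only [hg, h1, h2, h3]
      ring
    have h4 : (∫ u in B, g i j (e u)) = - ∫ u in B, g i j u := by
      simp_rw [hneg]
      exact integral_neg _
    rw [h4] at hcomp
    linarith
  -- diagonal integrals are all equal
  have hJdiag : ∀ i, (∫ u in B, g i i u) = ∫ u in B, g i₀ i₀ u := by
    intro i
    set e := LinearIsometryEquiv.piLpCongrLeft 2 ℝ ℝ (Equiv.swap i i₀) with he
    have hcomp := setIntegral_comp_isometry r e (g i i)
    have hcongr : ∀ u, g i i (e u) = g i₀ i₀ u := by
      intro u
      have h1 : (e u) i = u i₀ := by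
        rw [he, swap_coord_apply, Equiv.swap_apply_left]
      have h3 : ‖e u‖ = ‖u‖ := e.norm_map u
      simp only [hg, h1, h3]
    rw [← hcomp]
    exact integral_congr_ae (Filter.Eventually.of_forall hcongr)
  -- sum of diagonal integrals is the volume
  have hnormsq : ∀ u : EuclideanSpace ℝ (Fin k), (∑ i, u i * u i) = ‖u‖ ^ 2 := by
    intro u
    rw [← real_inner_self_eq_norm_sq]
    simp only [PiLp.inner_apply, RCLike.inner_apply, conj_trivial]
  have hone : ∀ᵐ u ∂(volume.restrict B), (∑ i, g i i u) = 1 := by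
    have h0 : ∀ᵐ u : EuclideanSpace ℝ (Fin k) ∂volume, u ≠ 0 := by
      rw [ae_iff]
      simp only [ne_eq, not_not]
      simpa using measure_singleton (0 : EuclideanSpace ℝ (Fin k))
    filter_upwards [ae_restrict_of_ae h0] with u hu
    have hn : (0:ℝ) < ‖u‖ := norm_pos_iff.2 hu
    simp only [hg]
    rw [← Finset.mul_sum, hnormsq]
    field_simp
  have hsum : (∑ i, ∫ u in B, g i i u) = (volume B).toReal := by
    rw [← integral_finset_sum _ (fun i _ => hInt i i), integral_congr_ae hone]
    simp
    rfl
  -- expand the inner product squared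
  have hexp : ∀ u : EuclideanSpace ℝ (Fin k),
      ⟪V, ‖u‖⁻¹ • u⟫ ^ 2 = ∑ i, ∑ j, (V i * V j) * g i j u := by
    intro u
    have h1 : ⟪V, ‖u‖⁻¹ • u⟫ = ‖u‖⁻¹ * ∑ i, V i * u i := by
      rw [real_inner_smul_right]
      congr 1
      simp only [PiLp.inner_apply, RCLike.inner_apply, conj_trivial, mul_comm]
    rw [h1, mul_pow, pow_two (∑ i, V i * u i), Finset.sum_mul_sum, Finset.mul_sum]
    refine Finset.sum_congr rfl fun i _ => ?_
    rw [Finset.mul_sum]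
    refine Finset.sum_congr rfl fun j _ => ?_
    simp only [hg]
    ring
  -- compute the integral
  have hIntc : ∀ i j, IntegrableOn (fun u => (V i * V j) * g i j u) B :=
    fun i j => (hInt i j).const_mul _
  have hmain : (∫ u in B, ⟪V, ‖u‖⁻¹ • u⟫ ^ 2)
      = ‖V‖ ^ 2 * ((volume B).toReal / k) := by
    have c := ∫ u in B, g i₀ i₀ u
    have hkc : (k : ℝ) * (∫ u in B, g i₀ i₀ u) = (volume B).toReal := by
      rw [← hsum]
      rw [Finset.sum_congr rfl (fun i _ => hJdiag i)]
      simp [mul_comm]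
    calc (∫ u in B, ⟪V, ‖u‖⁻¹ • u⟫ ^ 2)
        = ∫ u in B, ∑ i, ∑ j, (V i * V j) * g i j u := by
          exact integral_congr_ae (Filter.Eventually.of_forall fun u => hexp u)
      _ = ∑ i, ∑ j, (V i * V j) * ∫ u in B, g i j u := by
          rw [integral_finset_sum _ (fun i _ => integrable_finset_sum _ (fun j _ => hIntc i j))]
          refine Finset.sum_congr rfl fun i _ => ?_
          rw [integral_finset_sum _ (fun j _ => hIntc i j)]
          exact Finset.sum_congr rfl fun j _ => integral_const_mul _ _
      _ = ∑ i, (V i * V i) * ∫ u in B, g i₀ i₀ u := by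
          refine Finset.sum_congr rfl fun i _ => ?_
          rw [Finset.sum_eq_single i]
          · rw [hJdiag i]
          · intro j _ hji
            rw [hJzero i j hji, mul_zero]
          · intro h; exact absurd (Finset.mem_univ i) h
      _ = (∑ i, V i * V i) * ∫ u in B, g i₀ i₀ u := by rw [Finset.sum_mul]
      _ = ‖V‖ ^ 2 * ∫ u in B, g i₀ i₀ u := by rw [hnormsq V]
      _ = ‖V‖ ^ 2 * ((volume B).toReal / k) := by
          have hk0 : (k : ℝ) ≠ 0 := by positivity
          have h5 : (∫ u in B, g i₀ i₀ u) = (volume B).toReal / k := by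
            rw [← hkc]; field_simp
          rw [h5]
  rw [hmain]
  have hvolpos : 0 < (volume B).toReal := by
    have h1 : 0 < volume B := Metric.measure_ball_pos _ _ hr
    exact ENNReal.toReal_pos h1.ne' measure_ball_lt_top.ne
  have hk0 : (0:ℝ) < (k : ℝ) := by positivity
  field_simp
end

section
/- Let n ≥ 1 and let f : ℝⁿ → ℝ be continuously differentiable. Then for every x ∈ ℝⁿ, ‖∇f(x)‖² = lim_{ε→0⁺} (n / λ_n(B_n(x,ε))) · ∫_{B_n(x,ε)} ((f(x) − f(y)) / ‖x − y‖)² dλ_n(y), where the integrand is taken to be 0 at y = x. -/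
open MeasureTheory Filter Topology

open RealInnerProductSpace

variable {n : ℕ}

lemma aux_coord_le_norm (z : EuclideanSpace ℝ (Fin n)) (i : Fin n) : |z i| ≤ ‖z‖ := by
  have h1 : (z i : ℝ) = ⟪EuclideanSpace.single i (1:ℝ), z⟫ := by
    simp [EuclideanSpace.inner_single_left]
  have h := abs_real_inner_le_norm (EuclideanSpace.single i (1:ℝ)) z
  rw [EuclideanSpace.norm_single, ← h1, norm_one, one_mul] at h
  exact h

lemma aux_cont_coord (i : Fin n) : Continuous fun z : EuclideanSpace ℝ (Fin n) => z i :=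
  (EuclideanSpace.proj (𝕜 := ℝ) i).continuous

lemma aux_integrableOn_ball {F : EuclideanSpace ℝ (Fin n) → ℝ} (hF : Measurable F)
    {c : EuclideanSpace ℝ (Fin n)} {ε C : ℝ} (h : ∀ z ∈ Metric.ball c ε, |F z| ≤ C) :
    IntegrableOn F (Metric.ball c ε) := by
  refine Measure.integrableOn_of_bounded (M := C) measure_ball_lt_top.ne hF.aestronglyMeasurable ?_
  exact (ae_restrict_iff' measurableSet_ball).2
    (ae_of_all _ fun z hz => by simpa [Real.norm_eq_abs] using h z hz)

lemma aux_integral_comp_isometry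
    (e : EuclideanSpace ℝ (Fin n) ≃ₗᵢ[ℝ] EuclideanSpace ℝ (Fin n))
    (ε : ℝ) (F : EuclideanSpace ℝ (Fin n) → ℝ) :
    ∫ z in Metric.ball 0 ε, F (e z) = ∫ z in Metric.ball 0 ε, F z := by
  have hemb : MeasurableEmbedding e := e.toHomeomorph.measurableEmbedding
  have h := e.measurePreserving.setIntegral_preimage_emb hemb F (Metric.ball 0 ε)
  rw [← h]
  congr 1
  ext z
  simp [Metric.mem_ball, dist_eq_norm]

noncomputable def negAt (j : Fin n) :
    EuclideanSpace ℝ (Fin n) ≃ₗᵢ[ℝ] EuclideanSpace ℝ (Fin n) :=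
  LinearIsometryEquiv.piLpCongrRight 2
    (fun k => if k = j then LinearIsometryEquiv.neg ℝ else LinearIsometryEquiv.refl ℝ ℝ)

lemma negAt_apply (j : Fin n) (z : EuclideanSpace ℝ (Fin n)) (k : Fin n) :
    negAt j z k = if k = j then -z k else z k := by
  simp only [negAt, LinearIsometryEquiv.piLpCongrRight_apply]
  by_cases h : k = j <;> simp [h]

lemma aux_offdiag {i j : Fin n} (hij : i ≠ j) (ε : ℝ) :
    ∫ z in Metric.ball (0 : EuclideanSpace ℝ (Fin n)) ε, z i * z j / ‖z‖ ^ 2 = 0 := by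
  set F : EuclideanSpace ℝ (Fin n) → ℝ := fun z => z i * z j / ‖z‖ ^ 2 with hF
  have key : ∀ z, F (negAt j z) = - F z := by
    intro z
    have hn : ‖negAt j z‖ = ‖z‖ := (negAt j).norm_map z
    simp only [hF, hn, negAt_apply, if_neg hij, if_pos rfl, reduceIte]
    ring
  have h := aux_integral_comp_isometry (negAt j) ε F
  simp only [key, integral_neg] at h
  linarith

lemma aux_diag_eq (i i' : Fin n) (ε : ℝ) :
    ∫ z in Metric.ball (0 : EuclideanSpace ℝ (Fin n)) ε, (z i) ^ 2 / ‖z‖ ^ 2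
      = ∫ z in Metric.ball (0 : EuclideanSpace ℝ (Fin n)) ε, (z i') ^ 2 / ‖z‖ ^ 2 := by
  set e : EuclideanSpace ℝ (Fin n) ≃ₗᵢ[ℝ] EuclideanSpace ℝ (Fin n) :=
    LinearIsometryEquiv.piLpCongrLeft 2 ℝ ℝ (Equiv.swap i i') with he
  set F : EuclideanSpace ℝ (Fin n) → ℝ := fun z => (z i) ^ 2 / ‖z‖ ^ 2 with hF
  have key : ∀ z : EuclideanSpace ℝ (Fin n), F (e z) = (z i') ^ 2 / ‖z‖ ^ 2 := by
    intro z
    have hn : ‖e z‖ = ‖z‖ := e.norm_map z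
    have hcoord : e z i = z i' := by
      simp only [he, LinearIsometryEquiv.piLpCongrLeft_apply, Equiv.piCongrLeft'_apply]
      rw [Equiv.symm_swap, Equiv.swap_apply_left]
    simp [hF, hn, hcoord]
  have h := aux_integral_comp_isometry e ε F
  simp only [key] at h
  rw [← h]

lemma aux_diag_integrable (i : Fin n) {ε : ℝ} (c : EuclideanSpace ℝ (Fin n)) :
    IntegrableOn (fun z : EuclideanSpace ℝ (Fin n) => (z i) ^ 2 / ‖z‖ ^ 2)
      (Metric.ball c ε) := by
  have hmeas : Measurable fun z : EuclideanSpace ℝ (Fin n) => (z i) ^ 2 / ‖z‖ ^ 2 :=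
    (((aux_cont_coord i).pow 2).measurable).div ((continuous_norm.pow 2).measurable)
  refine aux_integrableOn_ball (C := 1) hmeas fun z _ => ?_
  rcases eq_or_ne z 0 with rfl | hz
  · simp
  · have hz' : (0:ℝ) < ‖z‖ ^ 2 := pow_pos (norm_pos_iff.2 hz) 2
    rw [abs_div, abs_pow, abs_pow, abs_norm, div_le_one hz']
    exact pow_le_pow_left₀ (abs_nonneg _) (aux_coord_le_norm z i) 2

lemma aux_sum_sq (z : EuclideanSpace ℝ (Fin n)) : ∑ i, (z i) ^ 2 = ‖z‖ ^ 2 := by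
  rw [EuclideanSpace.norm_eq, Real.sq_sqrt (Finset.sum_nonneg fun i _ => sq_nonneg _)]
  simp [Real.norm_eq_abs, sq_abs]

lemma aux_diag_value (hn : 1 ≤ n) (i : Fin n) {ε : ℝ} (hε : 0 < ε) :
    ∫ z in Metric.ball (0 : EuclideanSpace ℝ (Fin n)) ε, (z i) ^ 2 / ‖z‖ ^ 2
      = (volume (Metric.ball (0 : EuclideanSpace ℝ (Fin n)) ε)).toReal / n := by
  haveI : Nonempty (Fin n) := ⟨⟨0, hn⟩⟩
  have h0 : ∀ᵐ z ∂(volume : Measure (EuclideanSpace ℝ (Fin n))), z ≠ 0 := by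
    rw [ae_iff]
    simpa using measure_singleton (0 : EuclideanSpace ℝ (Fin n))
  have hsum : ∑ j : Fin n, ∫ z in Metric.ball (0 : EuclideanSpace ℝ (Fin n)) ε,
      (z j) ^ 2 / ‖z‖ ^ 2
      = (volume (Metric.ball (0 : EuclideanSpace ℝ (Fin n)) ε)).toReal := by
    rw [← integral_finset_sum _ (fun j _ => aux_diag_integrable j 0)]
    have hae : ∀ᵐ z ∂(volume.restrict (Metric.ball (0 : EuclideanSpace ℝ (Fin n)) ε)),
        (∑ j, (z j) ^ 2 / ‖z‖ ^ 2) = 1 := by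
      filter_upwards [ae_restrict_of_ae h0] with z hz
      rw [← Finset.sum_div, aux_sum_sq, div_self (pow_ne_zero 2 (norm_ne_zero_iff.2 hz))]
    rw [integral_congr_ae hae]
    simp
    rfl
  have hall : ∀ j : Fin n, ∫ z in Metric.ball (0 : EuclideanSpace ℝ (Fin n)) ε,
      (z j) ^ 2 / ‖z‖ ^ 2 = ∫ z in Metric.ball (0 : EuclideanSpace ℝ (Fin n)) ε,
      (z i) ^ 2 / ‖z‖ ^ 2 := fun j => aux_diag_eq j i ε
  rw [Finset.sum_congr rfl (fun j _ => hall j), Finset.sum_const, Finset.card_univ,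
    Fintype.card_fin, nsmul_eq_mul] at hsum
  have hn0 : (n : ℝ) ≠ 0 := Nat.cast_ne_zero.2 (by omega)
  field_simp at hsum ⊢
  linarith [hsum]

lemma aux_prod_integrable (i j : Fin n) {ε : ℝ} (c : EuclideanSpace ℝ (Fin n)) :
    IntegrableOn (fun z : EuclideanSpace ℝ (Fin n) => z i * z j / ‖z‖ ^ 2)
      (Metric.ball c ε) := by
  have hmeas : Measurable fun z : EuclideanSpace ℝ (Fin n) => z i * z j / ‖z‖ ^ 2 :=
    ((aux_cont_coord i).mul (aux_cont_coord j)).measurable.div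
      ((continuous_norm.pow 2).measurable)
  refine aux_integrableOn_ball (C := 1) hmeas fun z _ => ?_
  rcases eq_or_ne z 0 with rfl | hz
  · simp
  · have hz' : (0:ℝ) < ‖z‖ ^ 2 := pow_pos (norm_pos_iff.2 hz) 2
    rw [abs_div, abs_pow, abs_norm, div_le_one hz', abs_mul]
    calc |z i| * |z j| ≤ ‖z‖ * ‖z‖ :=
          mul_le_mul (aux_coord_le_norm z i) (aux_coord_le_norm z j) (abs_nonneg _)
            (norm_nonneg _)
      _ = ‖z‖ ^ 2 := (sq ‖z‖).symm

lemma aux_inner_sum (g z : EuclideanSpace ℝ (Fin n)) : ⟪g, z⟫ = ∑ i, g i * z i := by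
  rw [PiLp.inner_apply]
  simp [RCLike.inner_apply]
  exact Finset.sum_congr rfl fun _ _ => mul_comm _ _

lemma aux_lin (hn : 1 ≤ n) (g : EuclideanSpace ℝ (Fin n)) {ε : ℝ} (hε : 0 < ε) :
    ∫ z in Metric.ball (0 : EuclideanSpace ℝ (Fin n)) ε, (⟪g, z⟫ / ‖z‖) ^ 2
      = ‖g‖ ^ 2 * (volume (Metric.ball (0 : EuclideanSpace ℝ (Fin n)) ε)).toReal / n := by
  have hpt : ∀ z : EuclideanSpace ℝ (Fin n),
      (⟪g, z⟫ / ‖z‖) ^ 2 = ∑ i, ∑ j, g i * g j * (z i * z j / ‖z‖ ^ 2) := by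
    intro z
    rw [aux_inner_sum, div_pow, sq (∑ i, g i * z i), Finset.sum_mul_sum, Finset.sum_div]
    refine Finset.sum_congr rfl fun i _ => ?_
    rw [Finset.sum_div]
    exact Finset.sum_congr rfl fun j _ => by ring
  simp_rw [hpt]
  rw [integral_finset_sum _ (fun i _ => integrable_finset_sum _ (fun j _ =>
    ((aux_prod_integrable i j 0).const_mul _)))]
  have hterm : ∀ i : Fin n, ∫ z in Metric.ball (0 : EuclideanSpace ℝ (Fin n)) ε,
      (∑ j, g i * g j * (z i * z j / ‖z‖ ^ 2))
      = (g i) ^ 2 * ((volume (Metric.ball (0 : EuclideanSpace ℝ (Fin n)) ε)).toReal / n) := by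
    intro i
    rw [integral_finset_sum _ (fun j _ => ((aux_prod_integrable i j 0).const_mul _))]
    have : ∀ j : Fin n, ∫ z in Metric.ball (0 : EuclideanSpace ℝ (Fin n)) ε,
        g i * g j * (z i * z j / ‖z‖ ^ 2)
        = if j = i then (g i) ^ 2 * ((volume (Metric.ball (0 : EuclideanSpace ℝ (Fin n)) ε)).toReal / n) else 0 := by
      intro j
      rw [MeasureTheory.integral_const_mul]
      rcases eq_or_ne j i with rfl | hji
      · rw [if_pos rfl, ← sq]
        have := aux_diag_value hn j hε
        simp_rw [← sq]
        rw [this]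
      · rw [if_neg hji, aux_offdiag (Ne.symm hji) ε, mul_zero]
    rw [Finset.sum_congr rfl fun j _ => this j, Finset.sum_ite_eq' Finset.univ i _]
    simp
  rw [Finset.sum_congr rfl fun i _ => hterm i, ← Finset.sum_mul, aux_sum_sq g,
    mul_div_assoc]

lemma aux_translate (g x : EuclideanSpace ℝ (Fin n)) (ε : ℝ) :
    ∫ y in Metric.ball x ε, (⟪g, x - y⟫ / ‖x - y‖) ^ 2
      = ∫ z in Metric.ball (0 : EuclideanSpace ℝ (Fin n)) ε, (⟪g, z⟫ / ‖z‖) ^ 2 := by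
  have hmp : MeasurePreserving (fun y : EuclideanSpace ℝ (Fin n) => x - y) volume volume :=
    Measure.measurePreserving_sub_left volume x
  have hemb : MeasurableEmbedding (fun y : EuclideanSpace ℝ (Fin n) => x - y) :=
    (MeasurableEquiv.subLeft x).measurableEmbedding
  have h := hmp.setIntegral_preimage_emb hemb
    (fun y => (⟪g, x - y⟫ / ‖x - y‖) ^ 2) (Metric.ball x ε)
  rw [← h]
  have hpre : (fun y : EuclideanSpace ℝ (Fin n) => x - y) ⁻¹' Metric.ball x ε
      = Metric.ball 0 ε := by
    ext z
    simp [Metric.mem_ball, dist_eq_norm]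
  rw [hpre]
  refine setIntegral_congr_fun measurableSet_ball fun z _ => ?_
  simp [sub_sub_cancel]

lemma aux_inner_div_le (g x y : EuclideanSpace ℝ (Fin n)) :
    |⟪g, x - y⟫ / ‖x - y‖| ≤ ‖g‖ := by
  rcases eq_or_ne y x with rfl | hyx
  · simp
  · have hr : 0 < ‖x - y‖ := norm_sub_pos_iff.2 (Ne.symm hyx)
    rw [abs_div, abs_norm, div_le_iff₀ hr]
    exact abs_real_inner_le_norm g (x - y)

/-- **Integro-differential formula for the squared gradient norm.**
For a `C¹` function `f : ℝⁿ → ℝ` (`n ≥ 1`) and every `x`: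
`‖∇f(x)‖² = lim_{ε→0⁺} (n / λ_n(B(x,ε))) ∫_{B(x,ε)} ((f(x)-f(y))/‖x-y‖)² dy`
(the integrand vanishing at `y = x`, since division by `0` gives `0`). -/
theorem norm_gradient_sq_eq_limit_dispersion
    {n : ℕ} (hn : 1 ≤ n)
    (f : EuclideanSpace ℝ (Fin n) → ℝ) (hf : ContDiff ℝ 1 f)
    (x : EuclideanSpace ℝ (Fin n)) :
    Tendsto (fun ε : ℝ =>
        ((n : ℝ) / (volume (Metric.ball x ε)).toReal) *
          ∫ y in Metric.ball x ε, ((f x - f y) / ‖x - y‖) ^ 2)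
      (𝓝[>] 0) (𝓝 (‖gradient f x‖ ^ 2)) := by
  set g := gradient f x with hgdef
  have hg : HasGradientAt f g x := ((hf.differentiable one_ne_zero) x).hasGradientAt
  rw [hasGradientAt_iff_isLittleO] at hg
  rw [Metric.tendsto_nhdsWithin_nhds]
  intro η hη
  set D : ℝ := n * (2 * ‖g‖ + 1) with hD
  have hDpos : 0 ≤ D := by positivity
  set δ : ℝ := min 1 (η / (D + 1)) with hδ
  have hδpos : 0 < δ := lt_min one_pos (div_pos hη (by linarith))
  have hδ1 : δ ≤ 1 := min_le_left _ _
  have hδ2 : δ ≤ η / (D + 1) := min_le_right _ _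
  have hev := hg.def hδpos
  rw [Metric.eventually_nhds_iff] at hev
  obtain ⟨ε₀, hε₀, hball⟩ := hev
  refine ⟨ε₀, hε₀, fun ε hεmem hεd => ?_⟩
  have hεpos : 0 < ε := hεmem
  have hεlt : ε < ε₀ := by
    rwa [Real.dist_eq, sub_zero, abs_of_pos hεpos] at hεd
  -- pointwise difference bound
  have hbound : ∀ y ∈ Metric.ball x ε,
      |((f x - f y) / ‖x - y‖) ^ 2 - (⟪g, x - y⟫ / ‖x - y‖) ^ 2|
        ≤ δ * (2 * ‖g‖ + δ) := by
    intro y hy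
    rcases eq_or_ne y x with rfl | hyx
    · simp only [sub_self, norm_zero, div_zero, inner_zero_right, zero_pow, sub_zero, abs_zero]
      positivity
    · have hr : 0 < ‖x - y‖ := norm_sub_pos_iff.2 (Ne.symm hyx)
      set a : ℝ := (f x - f y) / ‖x - y‖ with ha
      set b : ℝ := ⟪g, x - y⟫ / ‖x - y‖ with hb
      have hlo : ‖f y - f x - ⟪g, y - x⟫‖ ≤ δ * ‖y - x‖ := by
        have hyd : dist y x < ε₀ := lt_trans (Metric.mem_ball.1 hy) hεlt
        simpa using hball hyd
      have h1 : |a - b| ≤ δ := by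
        have hinn : ⟪g, x - y⟫ = -⟪g, y - x⟫ := by
          rw [← inner_neg_right, neg_sub]
        have hxy : ‖x - y‖ = ‖y - x‖ := norm_sub_rev x y
        have hab : a - b = -((f y - f x - ⟪g, y - x⟫) / ‖y - x‖) := by
          rw [ha, hb, hinn, hxy, div_sub_div_same]
          ring_nf
        rw [hab, abs_neg, abs_div, abs_norm, div_le_iff₀ (hxy ▸ hr)]
        calc |f y - f x - ⟪g, y - x⟫| ≤ δ * ‖y - x‖ := by simpa using hlo
          _ = δ * ‖y - x‖ := rfl
      have h2 : |b| ≤ ‖g‖ := aux_inner_div_le g x y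
      have h3 : |a| ≤ ‖g‖ + δ := by
        have := abs_sub_abs_le_abs_sub a b
        linarith
      have key : |a ^ 2 - b ^ 2| = |a - b| * |a + b| := by
        rw [← abs_mul]
        ring_nf
      rw [key]
      have h4 : |a + b| ≤ 2 * ‖g‖ + δ := by
        calc |a + b| ≤ |a| + |b| := abs_add_le a b
          _ ≤ 2 * ‖g‖ + δ := by linarith
      exact mul_le_mul h1 h4 (abs_nonneg _) hδpos.le
  -- measurability
  have hmlin : Measurable fun y : EuclideanSpace ℝ (Fin n) => (⟪g, x - y⟫ / ‖x - y‖) ^ 2 := by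
    have hc1 : Continuous fun y : EuclideanSpace ℝ (Fin n) => ⟪g, x - y⟫ :=
      continuous_const.inner (continuous_const.sub continuous_id)
    have hc2 : Continuous fun y : EuclideanSpace ℝ (Fin n) => ‖x - y‖ :=
      (continuous_const.sub continuous_id).norm
    exact (hc1.measurable.div hc2.measurable).pow_const 2
  have hmact : Measurable fun y : EuclideanSpace ℝ (Fin n) => ((f x - f y) / ‖x - y‖) ^ 2 := by
    have hc1 : Continuous fun y : EuclideanSpace ℝ (Fin n) => f x - f y :=
      continuous_const.sub (hf.continuous)
    have hc2 : Continuous fun y : EuclideanSpace ℝ (Fin n) => ‖x - y‖ :=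
      (continuous_const.sub continuous_id).norm
    exact (hc1.measurable.div hc2.measurable).pow_const 2
  -- integrability
  have hilin : IntegrableOn (fun y => (⟪g, x - y⟫ / ‖x - y‖) ^ 2) (Metric.ball x ε) := by
    refine aux_integrableOn_ball (C := ‖g‖ ^ 2) hmlin fun y _ => ?_
    rw [abs_pow]
    exact pow_le_pow_left₀ (abs_nonneg _) (aux_inner_div_le g x y) 2
  have hiact : IntegrableOn (fun y => ((f x - f y) / ‖x - y‖) ^ 2) (Metric.ball x ε) := by
    refine aux_integrableOn_ball (C := ‖g‖ ^ 2 + δ * (2 * ‖g‖ + δ)) hmact fun y hy => ?_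
    have h1 := hbound y hy
    have h2 : |(⟪g, x - y⟫ / ‖x - y‖) ^ 2| ≤ ‖g‖ ^ 2 := by
      rw [abs_pow]
      exact pow_le_pow_left₀ (abs_nonneg _) (aux_inner_div_le g x y) 2
    have h3 := abs_add_le ((⟪g, x - y⟫ / ‖x - y‖) ^ 2)
      (((f x - f y) / ‖x - y‖) ^ 2 - (⟪g, x - y⟫ / ‖x - y‖) ^ 2)
    rw [add_sub_cancel] at h3
    linarith
  have hVpos : 0 < (volume (Metric.ball x ε)).toReal :=
    ENNReal.toReal_pos (Metric.measure_ball_pos volume x hεpos).ne' measure_ball_lt_top.ne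
  have hVeq : volume (Metric.ball x ε)
      = volume (Metric.ball (0 : EuclideanSpace ℝ (Fin n)) ε) :=
    Measure.addHaar_ball_center volume x ε
  have hlinval : ∫ y in Metric.ball x ε, (⟪g, x - y⟫ / ‖x - y‖) ^ 2
      = ‖g‖ ^ 2 * (volume (Metric.ball x ε)).toReal / n := by
    rw [aux_translate, aux_lin hn g hεpos, hVeq]
  have hdiff : |(∫ y in Metric.ball x ε, ((f x - f y) / ‖x - y‖) ^ 2)
      - ∫ y in Metric.ball x ε, (⟪g, x - y⟫ / ‖x - y‖) ^ 2|
      ≤ δ * (2 * ‖g‖ + δ) * (volume (Metric.ball x ε)).toReal := by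
    rw [← integral_sub hiact hilin]
    have h := norm_setIntegral_le_of_norm_le_const (μ := volume) (s := Metric.ball x ε)
      measure_ball_lt_top (C := δ * (2 * ‖g‖ + δ)) (fun y hy => by
        rw [Real.norm_eq_abs]; exact hbound y hy)
    rw [Real.norm_eq_abs] at h
    exact h
  have hn0 : (0:ℝ) < n := by exact_mod_cast hn
  have hVne : (volume (Metric.ball x ε)).toReal ≠ 0 := hVpos.ne'
  have hneq : ‖g‖ ^ 2 = ((n:ℝ) / (volume (Metric.ball x ε)).toReal)
      * ∫ y in Metric.ball x ε, (⟪g, x - y⟫ / ‖x - y‖) ^ 2 := by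
    rw [hlinval]
    field_simp
  set V : ℝ := (volume (Metric.ball x ε)).toReal with hV
  set IA : ℝ := ∫ y in Metric.ball x ε, ((f x - f y) / ‖x - y‖) ^ 2 with hIA
  set IL : ℝ := ∫ y in Metric.ball x ε, (⟪g, x - y⟫ / ‖x - y‖) ^ 2 with hIL
  have e0 : dist ((n:ℝ) / V * IA) (‖g‖ ^ 2) = ((n:ℝ) / V) * |IA - IL| := by
    rw [Real.dist_eq, hneq, ← mul_sub, abs_mul, abs_of_pos (div_pos hn0 hVpos)]
  rw [e0]
  have e1 : ((n:ℝ) / V) * |IA - IL| ≤ ((n:ℝ) / V) * (δ * (2 * ‖g‖ + δ) * V) :=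
    mul_le_mul_of_nonneg_left hdiff (div_pos hn0 hVpos).le
  have e2 : ((n:ℝ) / V) * (δ * (2 * ‖g‖ + δ) * V) = (n:ℝ) * (δ * (2 * ‖g‖ + δ)) := by
    field_simp
  have e3 : (n:ℝ) * (δ * (2 * ‖g‖ + δ)) ≤ δ * D := by
    rw [hD]
    nlinarith [mul_nonneg (mul_pos hn0 hδpos).le (sub_nonneg.2 hδ1)]
  have e4 : δ * (D + 1) ≤ η := by
    rw [← le_div_iff₀ (by linarith : (0:ℝ) < D + 1)]
    exact hδ2
  linarith
end

section
/- Let n ≥ 1 and let f : ℝⁿ → ℝ be continuously differentiable. Then for every x ∈ ℝⁿ, lim_{r→0⁺} (n / λ_n(B_n(x,r))) · ∫_{B_n(x,r)} ( (f(x) − f(y))₊ / ‖x − y‖ )² dλ_n(y) = (1/2)·‖∇f(x)‖², where the integrand is taken to be 0 at y = x. Consequently the oriented dispersion of a C¹ function equals half its (non-oriented) dispersion ‖∇f(x)‖². -/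
open MeasureTheory Filter Topology
open Metric
open scoped RealInnerProductSpace

variable {n : ℕ}

private lemma od_abs_coord_le (v : EuclideanSpace ℝ (Fin n)) (j : Fin n) : |v j| ≤ ‖v‖ := by
  rw [EuclideanSpace.norm_eq, ← Real.sqrt_sq_eq_abs]
  apply Real.sqrt_le_sqrt
  have := Finset.single_le_sum (f := fun k => ‖v k‖ ^ 2)
    (fun k _ => sq_nonneg _) (Finset.mem_univ j)
  simpa [Real.norm_eq_abs, sq_abs] using this

private lemma od_integrableOn {c : EuclideanSpace ℝ (Fin n) → ℝ} (hc : Measurable c) {C : ℝ}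
    (hC : ∀ u, |c u| ≤ C * ‖u‖) {s : Set (EuclideanSpace ℝ (Fin n))}
    (hμ : volume s < ⊤) :
    IntegrableOn (fun u => (c u / ‖u‖) ^ 2) s := by
  refine Measure.integrableOn_of_bounded (M := C ^ 2) hμ.ne
    ((hc.div measurable_norm).pow_const 2).aestronglyMeasurable ?_
  refine Eventually.of_forall fun u => ?_
  rw [Real.norm_eq_abs, abs_of_nonneg (sq_nonneg _)]
  rcases eq_or_ne u 0 with h | h
  · simp only [h, norm_zero, div_zero, ne_eq, OfNat.ofNat_ne_zero, not_false_eq_true, zero_pow]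
    positivity
  · have hu : 0 < ‖u‖ := norm_pos_iff.2 h
    have h1 : |c u / ‖u‖| ≤ C := by
      rw [abs_div, abs_of_nonneg hu.le, div_le_iff₀ hu]
      exact hC u
    calc (c u / ‖u‖) ^ 2 = |c u / ‖u‖| ^ 2 := (sq_abs _).symm
      _ ≤ C ^ 2 := by gcongr

private lemma od_coord_integral (hn : 1 ≤ n) {r : ℝ} (hr : 0 < r) (i : Fin n) :
    ∫ v in Metric.ball (0 : EuclideanSpace ℝ (Fin n)) r, (v i / ‖v‖) ^ 2 =
      (volume (Metric.ball (0 : EuclideanSpace ℝ (Fin n)) r)).toReal / n := by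
  haveI : Nonempty (Fin n) := ⟨⟨0, hn⟩⟩
  set i0 : Fin n := ⟨0, hn⟩
  have hmeas : ∀ j : Fin n, Measurable fun v : EuclideanSpace ℝ (Fin n) => v j := by
    intro j
    exact (EuclideanSpace.proj j).continuous.measurable
  have hvol : volume (Metric.ball (0 : EuclideanSpace ℝ (Fin n)) r) < ⊤ :=
    measure_ball_lt_top
  have hint : ∀ j : Fin n,
      IntegrableOn (fun v : EuclideanSpace ℝ (Fin n) => (v j / ‖v‖) ^ 2)
        (Metric.ball 0 r) := fun j =>
    od_integrableOn (hmeas j) (C := 1) (fun u => by simpa using od_abs_coord_le u j) hvol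
  -- all coordinate integrals are equal
  have hswap : ∀ j : Fin n,
      ∫ v in Metric.ball (0 : EuclideanSpace ℝ (Fin n)) r, (v j / ‖v‖) ^ 2 =
        ∫ v in Metric.ball (0 : EuclideanSpace ℝ (Fin n)) r, (v i0 / ‖v‖) ^ 2 := by
    intro j
    set e : EuclideanSpace ℝ (Fin n) ≃ₗᵢ[ℝ] EuclideanSpace ℝ (Fin n) :=
      LinearIsometryEquiv.piLpCongrLeft 2 ℝ ℝ (Equiv.swap i0 j) with he
    have hmp : MeasurePreserving e volume volume := e.measurePreserving
    have hemb : MeasurableEmbedding e := e.toHomeomorph.measurableEmbedding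
    have hpre : e ⁻¹' (Metric.ball (0 : EuclideanSpace ℝ (Fin n)) r) = Metric.ball 0 r := by
      ext u
      simp [mem_ball_zero_iff, e.norm_map]
    have key := hmp.setIntegral_preimage_emb hemb
      (fun v : EuclideanSpace ℝ (Fin n) => (v i0 / ‖v‖) ^ 2) (Metric.ball 0 r)
    rw [hpre] at key
    rw [← key]
    refine setIntegral_congr_fun measurableSet_ball fun u _ => ?_
    have h1 : (e u) i0 = u j := by
      rw [he]
      rw [LinearIsometryEquiv.piLpCongrLeft_apply]
      simp only [Equiv.piCongrLeft'_apply, Equiv.symm_swap]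
      rw [Equiv.swap_apply_left]
    rw [h1, e.norm_map]
  have hsum : ∀ v : EuclideanSpace ℝ (Fin n), v ≠ 0 →
      ∑ j : Fin n, (v j / ‖v‖) ^ 2 = 1 := by
    intro v hv
    have hnorm : ‖v‖ ^ 2 = ∑ j, (v j) ^ 2 := by
      rw [EuclideanSpace.norm_eq, Real.sq_sqrt (by positivity)]
      simp [Real.norm_eq_abs, sq_abs]
    simp_rw [div_pow, ← Finset.sum_div, ← hnorm]
    exact div_self (pow_ne_zero 2 (norm_ne_zero_iff.2 hv))
  haveI : Nontrivial (EuclideanSpace ℝ (Fin n)) := by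
    refine nontrivial_of_ne (EuclideanSpace.single i0 1) 0 fun h => ?_
    have := congrArg (fun v : EuclideanSpace ℝ (Fin n) => ‖v‖) h
    simp at this
  have htotal : ∑ j : Fin n, ∫ v in Metric.ball (0 : EuclideanSpace ℝ (Fin n)) r,
      (v j / ‖v‖) ^ 2 = (volume (Metric.ball (0 : EuclideanSpace ℝ (Fin n)) r)).toReal := by
    rw [← integral_finset_sum _ (fun j _ => hint j)]
    have hae : ∀ᵐ v ∂(volume.restrict (Metric.ball (0 : EuclideanSpace ℝ (Fin n)) r)),
        (∑ j : Fin n, (v j / ‖v‖) ^ 2) = 1 := by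
      have h0 : (volume : Measure (EuclideanSpace ℝ (Fin n))) {0} = 0 := measure_singleton 0
      refine ae_restrict_of_ae ?_
      rw [ae_iff]
      refine measure_mono_null (fun v hv => ?_) h0
      simp only [Set.mem_setOf_eq] at hv
      by_contra hne
      exact hv (hsum v (by simpa using hne))
    rw [integral_congr_ae hae]
    simp [Measure.restrict_apply]
    rfl
  have hcount : ∑ j : Fin n, ∫ v in Metric.ball (0 : EuclideanSpace ℝ (Fin n)) r,
      (v j / ‖v‖) ^ 2 = (n : ℝ) * ∫ v in Metric.ball (0 : EuclideanSpace ℝ (Fin n)) r,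
      (v i0 / ‖v‖) ^ 2 := by
    rw [Finset.sum_congr rfl (fun j _ => hswap j)]
    simp [Finset.sum_const, nsmul_eq_mul]
  have hn0 : (n : ℝ) ≠ 0 := Nat.cast_ne_zero.2 (by omega)
  rw [hswap i]
  rw [hcount] at htotal
  rw [eq_div_iff hn0, mul_comm]
  exact htotal

private lemma od_inner_integral (hn : 1 ≤ n) (g : EuclideanSpace ℝ (Fin n)) {r : ℝ}
    (hr : 0 < r) :
    ∫ u in Metric.ball (0 : EuclideanSpace ℝ (Fin n)) r, (⟪g, u⟫ / ‖u‖) ^ 2 =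
      (volume (Metric.ball (0 : EuclideanSpace ℝ (Fin n)) r)).toReal * ‖g‖ ^ 2 / n := by
  rcases eq_or_ne g 0 with rfl | hg
  · simp
  · set i0 : Fin n := ⟨0, hn⟩
    set w : EuclideanSpace ℝ (Fin n) := ‖g‖⁻¹ • g with hw_def
    have hw : ‖w‖ = 1 := norm_smul_inv_norm hg
    haveI : Unique ↥({i0} : Set (Fin n)) := Set.uniqueSingleton i0
    have horth : Orthonormal ℝ (({i0} : Set (Fin n)).restrict
        (fun _ : Fin n => w)) := by
      constructor
      · intro i; exact hw
      · intro i j hij; exact absurd (Subsingleton.elim i j) hij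
    obtain ⟨b, hb⟩ := horth.exists_orthonormalBasis_extension_of_card_eq
      (by simp [finrank_euclideanSpace])
    have hb0 : b i0 = w := hb i0 rfl
    have hrepr : ∀ u : EuclideanSpace ℝ (Fin n), b.repr u i0 = ‖g‖⁻¹ * ⟪g, u⟫ := by
      intro u
      rw [b.repr_apply_apply, hb0, hw_def, real_inner_smul_left]
    have hmp : MeasurePreserving b.repr volume volume := b.measurePreserving_repr
    have hemb : MeasurableEmbedding b.repr := b.repr.toHomeomorph.measurableEmbedding
    have hpre : ⇑b.repr ⁻¹' (Metric.ball (0 : EuclideanSpace ℝ (Fin n)) r) =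
        Metric.ball 0 r := by
      ext u
      simp [mem_ball_zero_iff, b.repr.norm_map]
    have hgn : ‖g‖ ≠ 0 := norm_ne_zero_iff.2 hg
    have key := hmp.setIntegral_preimage_emb hemb
      (fun v : EuclideanSpace ℝ (Fin n) => ‖g‖ ^ 2 * (v i0 / ‖v‖) ^ 2) (Metric.ball 0 r)
    rw [hpre] at key
    calc ∫ u in Metric.ball (0 : EuclideanSpace ℝ (Fin n)) r, (⟪g, u⟫ / ‖u‖) ^ 2
        = ∫ u in Metric.ball (0 : EuclideanSpace ℝ (Fin n)) r,
            ‖g‖ ^ 2 * (b.repr u i0 / ‖b.repr u‖) ^ 2 := by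
          refine setIntegral_congr_fun measurableSet_ball fun u _ => ?_
          rw [hrepr, b.repr.norm_map, mul_div_assoc, mul_pow, ← mul_assoc, ← mul_pow,
            mul_inv_cancel₀ hgn, one_pow, one_mul]
      _ = ∫ v in Metric.ball (0 : EuclideanSpace ℝ (Fin n)) r,
            ‖g‖ ^ 2 * (v i0 / ‖v‖) ^ 2 := key
      _ = ‖g‖ ^ 2 * ∫ v in Metric.ball (0 : EuclideanSpace ℝ (Fin n)) r,
            (v i0 / ‖v‖) ^ 2 := by rw [integral_const_mul]
      _ = (volume (Metric.ball (0 : EuclideanSpace ℝ (Fin n)) r)).toReal * ‖g‖ ^ 2 / n := by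
          rw [od_coord_integral hn hr i0]
          ring

private lemma od_pos_part_integral (hn : 1 ≤ n) (g : EuclideanSpace ℝ (Fin n)) {r : ℝ}
    (hr : 0 < r) :
    ∫ u in Metric.ball (0 : EuclideanSpace ℝ (Fin n)) r, (max ⟪g, u⟫ 0 / ‖u‖) ^ 2 =
      (volume (Metric.ball (0 : EuclideanSpace ℝ (Fin n)) r)).toReal * ‖g‖ ^ 2 / (2 * n) := by
  have hinner_meas : Measurable fun u : EuclideanSpace ℝ (Fin n) => ⟪g, u⟫ :=
    (continuous_const.inner continuous_id).measurable
  have hvol : volume (Metric.ball (0 : EuclideanSpace ℝ (Fin n)) r) < ⊤ :=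
    measure_ball_lt_top
  have hbnd1 : ∀ u : EuclideanSpace ℝ (Fin n), |max ⟪g, u⟫ 0| ≤ ‖g‖ * ‖u‖ := by
    intro u
    rw [abs_of_nonneg (le_max_right _ _)]
    exact le_trans (max_le (real_inner_le_norm g u) (by positivity)) le_rfl
  have hbnd2 : ∀ u : EuclideanSpace ℝ (Fin n), |max (-⟪g, u⟫) 0| ≤ ‖g‖ * ‖u‖ := by
    intro u
    rw [abs_of_nonneg (le_max_right _ _)]
    refine max_le ?_ (by positivity)
    rw [← inner_neg_right]
    exact le_trans (real_inner_le_norm g (-u)) (by rw [norm_neg])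
  have int1 : IntegrableOn (fun u : EuclideanSpace ℝ (Fin n) => (max ⟪g, u⟫ 0 / ‖u‖) ^ 2)
      (Metric.ball 0 r) := od_integrableOn (hinner_meas.max measurable_const) hbnd1 hvol
  have int2 : IntegrableOn (fun u : EuclideanSpace ℝ (Fin n) => (max (-⟪g, u⟫) 0 / ‖u‖) ^ 2)
      (Metric.ball 0 r) := od_integrableOn (hinner_meas.neg.max measurable_const) hbnd2 hvol
  -- the two halves are equal, by the symmetry u ↦ -u
  have hmp := Measure.measurePreserving_neg (volume : Measure (EuclideanSpace ℝ (Fin n)))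
  have hemb : MeasurableEmbedding (fun u : EuclideanSpace ℝ (Fin n) => -u) :=
    (Homeomorph.neg (EuclideanSpace ℝ (Fin n))).measurableEmbedding
  have hpre : (fun u : EuclideanSpace ℝ (Fin n) => -u) ⁻¹'
      (Metric.ball (0 : EuclideanSpace ℝ (Fin n)) r) = Metric.ball 0 r := by
    ext u
    simp [mem_ball_zero_iff]
  have hNP : ∫ u in Metric.ball (0 : EuclideanSpace ℝ (Fin n)) r,
      (max (-⟪g, u⟫) 0 / ‖u‖) ^ 2 = ∫ u in Metric.ball (0 : EuclideanSpace ℝ (Fin n)) r,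
      (max ⟪g, u⟫ 0 / ‖u‖) ^ 2 := by
    have key := hmp.setIntegral_preimage_emb hemb
      (fun u : EuclideanSpace ℝ (Fin n) => (max ⟪g, u⟫ 0 / ‖u‖) ^ 2) (Metric.ball 0 r)
    rw [hpre] at key
    rw [← key]
    refine setIntegral_congr_fun measurableSet_ball fun u _ => ?_
    rw [inner_neg_right, norm_neg]
  have hadd : ∀ u : EuclideanSpace ℝ (Fin n),
      (max ⟪g, u⟫ 0 / ‖u‖) ^ 2 + (max (-⟪g, u⟫) 0 / ‖u‖) ^ 2 = (⟪g, u⟫ / ‖u‖) ^ 2 := by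
    intro u
    rcases le_total 0 ⟪g, u⟫ with h | h
    · rw [max_eq_left h, max_eq_right (neg_nonpos.2 h)]
      simp
    · rw [max_eq_right h, max_eq_left (neg_nonneg.2 h)]
      simp [neg_div, neg_sq]
  have hsum : (∫ u in Metric.ball (0 : EuclideanSpace ℝ (Fin n)) r,
        (max ⟪g, u⟫ 0 / ‖u‖) ^ 2) + ∫ u in Metric.ball (0 : EuclideanSpace ℝ (Fin n)) r,
        (max (-⟪g, u⟫) 0 / ‖u‖) ^ 2 =
      (volume (Metric.ball (0 : EuclideanSpace ℝ (Fin n)) r)).toReal * ‖g‖ ^ 2 / n := by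
    rw [← integral_add int1 int2, ← od_inner_integral hn g hr]
    exact setIntegral_congr_fun measurableSet_ball fun u _ => hadd u
  rw [hNP] at hsum
  have hn0 : (n : ℝ) ≠ 0 := Nat.cast_ne_zero.2 (by omega)
  field_simp at hsum ⊢
  linarith

/-- **The oriented dispersion of a `C¹` function is half of its dispersion.**
For a `C¹` function `f : ℝⁿ → ℝ` (`n ≥ 1`) and every `x`:
`lim_{r→0⁺} (n / λ_n(B(x,r))) ∫_{B(x,r)} ((f(x)-f(y))₊/‖x-y‖)² dy = ‖∇f(x)‖²/2`
(the integrand vanishing at `y = x`, since division by `0` gives `0`). -/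
theorem oriented_dispersion_eq_half_norm_gradient_sq
    {n : ℕ} (hn : 1 ≤ n)
    (f : EuclideanSpace ℝ (Fin n) → ℝ) (hf : ContDiff ℝ 1 f)
    (x : EuclideanSpace ℝ (Fin n)) :
    Tendsto (fun r : ℝ =>
        ((n : ℝ) / (volume (Metric.ball x r)).toReal) *
          ∫ y in Metric.ball x r, (max (f x - f y) 0 / ‖x - y‖) ^ 2)
      (𝓝[>] 0) (𝓝 ((1 / 2) * ‖gradient f x‖ ^ 2)) := by
  classical
  set g := gradient f x with hg_def
  have hdiff : DifferentiableAt ℝ f x := (hf.differentiable one_ne_zero) x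
  have hLO := hasGradientAt_iff_isLittleO.1 hdiff.hasGradientAt
  obtain ⟨K, t, ht, hlip⟩ := (hf.contDiffAt (x := x)).exists_lipschitzOnWith
  obtain ⟨δ₂, hδ₂pos, hδ₂⟩ := Metric.mem_nhds_iff.1 ht
  rw [Metric.tendsto_nhdsWithin_nhds]
  intro ε hε
  set M : ℝ := 2 * ‖g‖ + 1 with hM_def
  have hM : 0 < M := by positivity
  set ε' : ℝ := min 1 (ε / (2 * (n + 1) * M)) with hε'_def
  have hε'pos : 0 < ε' := lt_min one_pos (by positivity)
  have hε'le1 : ε' ≤ 1 := min_le_left _ _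
  obtain ⟨δ₁, hδ₁pos, hδ₁⟩ := Metric.eventually_nhds_iff.1 (hLO.def hε'pos)
  refine ⟨min δ₁ δ₂, lt_min hδ₁pos hδ₂pos, ?_⟩
  intro r hr hrd
  have hrpos : 0 < r := hr
  have hrδ₁ : r < δ₁ := by
    rw [Real.dist_eq, sub_zero, abs_of_pos hrpos] at hrd
    exact hrd.trans_le (min_le_left _ _)
  have hrδ₂ : r < δ₂ := by
    rw [Real.dist_eq, sub_zero, abs_of_pos hrpos] at hrd
    exact hrd.trans_le (min_le_right _ _)
  -- notation
  set φ : EuclideanSpace ℝ (Fin n) → ℝ := fun y => (max (f x - f y) 0 / ‖x - y‖) ^ 2 with hφ_def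
  set ψ : EuclideanSpace ℝ (Fin n) → ℝ := fun y => (max ⟪g, x - y⟫ 0 / ‖x - y‖) ^ 2 with hψ_def
  have hvol_lt : volume (Metric.ball x r) < ⊤ := measure_ball_lt_top
  have hvol_pos : 0 < (volume (Metric.ball x r)).toReal :=
    ENNReal.toReal_pos (measure_ball_pos volume x hrpos).ne' hvol_lt.ne
  set V : ℝ := (volume (Metric.ball x r)).toReal with hV_def
  -- the ψ integral is exactly computable
  have hψval : ∫ y in Metric.ball x r, ψ y = V * ‖g‖ ^ 2 / (2 * n) := by
    have hmp := Measure.measurePreserving_sub_left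
      (volume : Measure (EuclideanSpace ℝ (Fin n))) x
    have hemb : MeasurableEmbedding (fun u : EuclideanSpace ℝ (Fin n) => x - u) :=
      (Homeomorph.subLeft x).measurableEmbedding
    have hpre : (fun u : EuclideanSpace ℝ (Fin n) => x - u) ⁻¹' Metric.ball x r =
        Metric.ball 0 r := by
      ext u
      simp [Metric.mem_ball, dist_eq_norm, mem_ball_zero_iff, sub_sub_cancel_left]
    have key := hmp.setIntegral_preimage_emb hemb ψ (Metric.ball x r)
    rw [hpre] at key
    rw [← key]
    have : ∫ u in Metric.ball (0 : EuclideanSpace ℝ (Fin n)) r, ψ (x - u) =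
        ∫ u in Metric.ball (0 : EuclideanSpace ℝ (Fin n)) r, (max ⟪g, u⟫ 0 / ‖u‖) ^ 2 := by
      refine setIntegral_congr_fun measurableSet_ball fun u _ => ?_
      rw [hψ_def]
      simp only [sub_sub_cancel]
    rw [this, od_pos_part_integral hn g hrpos, hV_def,
      Measure.addHaar_ball_center volume x r]
  -- integrability of the two integrands
  have hsq_bound : ∀ p c C : ℝ, 0 < c → 0 ≤ C → |p| ≤ C * c → (max p 0 / c) ^ 2 ≤ C ^ 2 := by
    intro p c C hc hC hp
    have h1 : 0 ≤ max p 0 / c := by positivity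
    have h2 : max p 0 / c ≤ C := by
      rw [div_le_iff₀ hc]
      exact max_le ((le_abs_self p).trans hp) (by positivity)
    calc (max p 0 / c) ^ 2 ≤ C ^ 2 := by gcongr
      _ = C ^ 2 := rfl
  have hxt : x ∈ t := hδ₂ (mem_ball_self hδ₂pos)
  have hfmeas : Measurable f := hf.continuous.measurable
  have hnorm_meas : Measurable fun y : EuclideanSpace ℝ (Fin n) => ‖x - y‖ :=
    (measurable_const.sub measurable_id).norm
  have hφmeas : AEStronglyMeasurable φ (volume : Measure (EuclideanSpace ℝ (Fin n))) :=
    ((((measurable_const.sub hfmeas).max measurable_const).div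
      hnorm_meas).pow_const 2).aestronglyMeasurable
  have hψmeas : AEStronglyMeasurable ψ (volume : Measure (EuclideanSpace ℝ (Fin n))) := by
    have : Measurable fun y : EuclideanSpace ℝ (Fin n) => ⟪g, x - y⟫ :=
      (continuous_const.inner (continuous_const.sub continuous_id)).measurable
    exact (((this.max measurable_const).div hnorm_meas).pow_const 2).aestronglyMeasurable
  have hφint : IntegrableOn φ (Metric.ball x r) := by
    refine Measure.integrableOn_of_bounded (M := (K : ℝ) ^ 2) hvol_lt.ne hφmeas ?_
    refine (ae_restrict_iff' measurableSet_ball).2 (Eventually.of_forall fun y hy => ?_)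
    rw [Real.norm_eq_abs, hφ_def, abs_of_nonneg (sq_nonneg _)]
    rcases eq_or_ne y x with rfl | hyx
    · simp only [sub_self, norm_zero, div_zero, max_self, ne_eq, OfNat.ofNat_ne_zero,
        not_false_eq_true, zero_pow]
      positivity
    · have hc : 0 < ‖x - y‖ := by
        rw [norm_sub_pos_iff]
        exact fun h => hyx (h.symm)
      refine hsq_bound _ _ _ hc K.coe_nonneg ?_
      have hyt : y ∈ t := hδ₂ (mem_ball.2 ((mem_ball.1 hy).trans hrδ₂))
      have := hlip.dist_le_mul x hxt y hyt
      rwa [Real.dist_eq, dist_eq_norm] at this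
  have hψint : IntegrableOn ψ (Metric.ball x r) := by
    refine Measure.integrableOn_of_bounded (M := ‖g‖ ^ 2) hvol_lt.ne hψmeas ?_
    refine (ae_restrict_iff' measurableSet_ball).2 (Eventually.of_forall fun y hy => ?_)
    rw [Real.norm_eq_abs, hψ_def, abs_of_nonneg (sq_nonneg _)]
    rcases eq_or_ne y x with rfl | hyx
    · simp only [sub_self, norm_zero, div_zero, inner_zero_right, max_self, ne_eq,
        OfNat.ofNat_ne_zero, not_false_eq_true, zero_pow]
      positivity
    · have hc : 0 < ‖x - y‖ := by
        rw [norm_sub_pos_iff]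
        exact fun h => hyx (h.symm)
      exact hsq_bound _ _ _ hc (norm_nonneg g) (abs_real_inner_le_norm g (x - y))
  -- pointwise comparison of the two integrands
  have hsub_bound : ∀ y ∈ Metric.ball x r, |φ y - ψ y| ≤ ε' * M := by
    intro y hy
    rcases eq_or_ne y x with rfl | hyx
    · have : φ y - ψ y = 0 := by
        rw [hφ_def, hψ_def]
        simp
      rw [this, abs_zero]
      positivity
    · have hc : 0 < ‖x - y‖ := by
        rw [norm_sub_pos_iff]
        exact fun h => hyx (h.symm)
      set c : ℝ := ‖x - y‖ with hc_def
      set a : ℝ := (f x - f y) / c with ha_def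
      set b : ℝ := ⟪g, x - y⟫ / c with hb_def
      have hmax1 : max (f x - f y) 0 / c = max a 0 := by
        rw [ha_def]
        calc max (f x - f y) 0 / c = max ((f x - f y) / c) (0 / c) :=
              (max_div_div_right hc.le _ _).symm
          _ = max ((f x - f y) / c) 0 := by rw [zero_div]
      have hmax2 : max ⟪g, x - y⟫ 0 / c = max b 0 := by
        rw [hb_def]
        calc max ⟪g, x - y⟫ 0 / c = max (⟪g, x - y⟫ / c) (0 / c) :=
              (max_div_div_right hc.le _ _).symm
          _ = max (⟪g, x - y⟫ / c) 0 := by rw [zero_div]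
      have hab : |a - b| ≤ ε' := by
        have h1 := hδ₁ (show dist y x < δ₁ from (mem_ball.1 hy).trans hrδ₁)
        have hinner : ⟪g, x - y⟫ = -⟪g, y - x⟫ := by
          rw [← inner_neg_right, neg_sub]
        have h2 : a - b = -((f y - f x - ⟪g, y - x⟫) / c) := by
          rw [ha_def, hb_def, hinner]
          ring
        rw [h2, abs_neg, abs_div, abs_of_pos hc, div_le_iff₀ hc]
        calc |f y - f x - ⟪g, y - x⟫| ≤ ε' * ‖y - x‖ := by
              simpa only [Real.norm_eq_abs] using h1
          _ = ε' * c := by rw [norm_sub_rev]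
      have hb : |b| ≤ ‖g‖ := by
        rw [hb_def, abs_div, abs_of_pos hc, div_le_iff₀ hc]
        exact abs_real_inner_le_norm g (x - y)
      have ha : |a| ≤ ‖g‖ + ε' := by
        calc |a| = |b + (a - b)| := by ring_nf
          _ ≤ |b| + |a - b| := abs_add_le _ _
          _ ≤ ‖g‖ + ε' := add_le_add hb hab
      have e1 : |max a 0 - max b 0| ≤ |a - b| := abs_max_sub_max_le_abs a b 0
      have e2 : |max a 0 + max b 0| ≤ |a| + |b| := by
        rw [abs_of_nonneg (by positivity)]
        exact add_le_add (max_le (le_abs_self a) (abs_nonneg a))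
          (max_le (le_abs_self b) (abs_nonneg b))
      have key : |φ y - ψ y| = |(max a 0) ^ 2 - (max b 0) ^ 2| := by
        rw [hφ_def, hψ_def]
        simp only [← hc_def, hmax1, hmax2]
      rw [key, sq_sub_sq, abs_mul]
      calc |max a 0 + max b 0| * |max a 0 - max b 0| ≤ (|a| + |b|) * |a - b| := by
            exact mul_le_mul e2 e1 (abs_nonneg _) (by positivity)
        _ ≤ M * ε' := by
            refine mul_le_mul ?_ hab (abs_nonneg _) hM.le
            rw [hM_def]
            calc |a| + |b| ≤ (‖g‖ + ε') + ‖g‖ := add_le_add ha hb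
              _ ≤ 2 * ‖g‖ + 1 := by linarith [hε'le1]
        _ = ε' * M := mul_comm _ _
  -- the integrals are close
  have hdiff_int : |(∫ y in Metric.ball x r, φ y) - ∫ y in Metric.ball x r, ψ y| ≤
      (ε' * M) * V := by
    rw [← integral_sub hφint hψint, ← Real.norm_eq_abs]
    exact norm_setIntegral_le_of_norm_le_const hvol_lt
      fun y hy => by simpa [Real.norm_eq_abs] using hsub_bound y hy
  -- conclusion
  have hV0 : V ≠ 0 := hvol_pos.ne'
  have hLeq : ((n : ℝ) / V) * ∫ y in Metric.ball x r, ψ y = 1 / 2 * ‖g‖ ^ 2 := by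
    have hn0 : (n : ℝ) ≠ 0 := Nat.cast_ne_zero.2 (by omega)
    rw [hψval]
    field_simp
  rw [Real.dist_eq]
  have hrw : ((n : ℝ) / V) * (∫ y in Metric.ball x r, φ y) - 1 / 2 * ‖g‖ ^ 2 =
      ((n : ℝ) / V) * ((∫ y in Metric.ball x r, φ y) - ∫ y in Metric.ball x r, ψ y) := by
    rw [← hLeq]
    ring
  rw [hrw, abs_mul, abs_of_nonneg (by positivity : (0:ℝ) ≤ (n : ℝ) / V)]
  have hfinal1 : ((n : ℝ) / V) * |(∫ y in Metric.ball x r, φ y) -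
      ∫ y in Metric.ball x r, ψ y| ≤ (n : ℝ) * ε' * M := by
    calc ((n : ℝ) / V) * |(∫ y in Metric.ball x r, φ y) - ∫ y in Metric.ball x r, ψ y|
        ≤ ((n : ℝ) / V) * ((ε' * M) * V) := by gcongr
      _ = (n : ℝ) * ε' * M := by
          field_simp
  refine lt_of_le_of_lt hfinal1 ?_
  have hε'le2 : ε' ≤ ε / (2 * ((n : ℝ) + 1) * M) := min_le_right _ _
  have h2 : (n : ℝ) * ε' * M ≤ (n : ℝ) * (ε / (2 * ((n : ℝ) + 1) * M)) * M := by
    gcongr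
  refine lt_of_le_of_lt h2 ?_
  have h3 : (n : ℝ) * (ε / (2 * ((n : ℝ) + 1) * M)) * M = ε * ((n : ℝ) / (2 * ((n : ℝ) + 1))) := by
    field_simp
  rw [h3]
  have h4 : (n : ℝ) / (2 * ((n : ℝ) + 1)) < 1 := by
    rw [div_lt_one (by positivity)]
    have : (0:ℝ) ≤ (n : ℝ) := Nat.cast_nonneg n
    linarith
  calc ε * ((n : ℝ) / (2 * ((n : ℝ) + 1))) < ε * 1 := by
        exact mul_lt_mul_of_pos_left h4 hε
    _ = ε := mul_one ε
end

section
/- Let X be a nonempty topological space, let μ assign to each x ∈ X a Borel measure μ_x on X that is finite on all compact sets, and let φ : [0,+∞) → [0,+∞) be strictly increasing with φ(0) = 0. Define the oriented nonlocal operator T⁺_{φ,μ}[f](x) := ∫_X φ( (f(x) − f(y))₊ ) dμ_x(y) ∈ [0,+∞]. Then: (1) T⁺_{φ,μ} is a descent modulus for the class K(X) of continuous coercive functions (it preserves global minima, is monotone, and is scalar-monotone); and (2) every continuous strictly coercive function f (i.e., [f ≤ f(x)] is compact for every x ∈ X) satisfies T⁺_{φ,μ}[f](x) < +∞ for all x ∈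 X. -/
open MeasureTheory

/-- **Oriented nonlocal operators are descent moduli.**
Let `X` be a nonempty topological (Borel) space, `μ` a map assigning to each
`x ∈ X` a Borel measure `μ_x` finite on compact sets, and
`φ : [0,∞) → [0,∞)` strictly increasing with `φ(0) = 0`.  Then the oriented
nonlocal operator `T⁺_{φ,μ}[f](x) = ∫_X φ((f(x) - f(y))₊) dμ_x(y)` is a
descent modulus for the class `K(X)` of continuous coercive functions, and
it is finite at every point for every continuous strictly coercive function. -/
theorem oriented_nonlocal_is_descent_modulus
    {X : Type*} [TopologicalSpace X] [Nonempty X]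
    [MeasurableSpace X] [BorelSpace X]
    (μ : X → Measure X)
    (hμ : ∀ x : X, ∀ K : Set X, IsCompact K → μ x K < ⊤)
    (φ : ℝ → ℝ)
    (hφ_mono : StrictMonoOn φ (Set.Ici 0))
    (hφ_nonneg : ∀ t, 0 ≤ t → 0 ≤ φ t)
    (hφ_zero : φ 0 = 0) :
    IsDescentModulus
      {f : X → ℝ | Continuous f ∧
        ∀ α : ℝ, (∃ x, α < f x) → IsCompact {x | f x ≤ α}}
      (fun f x => ∫⁻ y, ENNReal.ofReal (φ (max (f x - f y) 0)) ∂(μ x)) ∧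
    (∀ f : X → ℝ, Continuous f → (∀ x, IsCompact {z | f z ≤ f x}) →
      ∀ x, (∫⁻ y, ENNReal.ofReal (φ (max (f x - f y) 0)) ∂(μ x)) < ⊤) := by
  -- the auxiliary function `ψ t = φ (max t 0)` is monotone, hence measurable
  set ψ : ℝ → ℝ := fun t => φ (max t 0) with hψ
  have hψ_mono : Monotone ψ := by
    intro a b hab
    exact hφ_mono.monotoneOn (le_max_right a 0) (le_max_right b 0)
      (max_le_max hab le_rfl)
  have hψ_meas : Measurable ψ := hψ_mono.measurable
  -- measurability of the integrand
  have hmeas : ∀ (f : X → ℝ), Continuous f → ∀ x : X,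
      Measurable (fun y => ENNReal.ofReal (φ (max (f x - f y) 0))) := by
    intro f hf x
    exact ENNReal.measurable_ofReal.comp
      (hψ_meas.comp ((continuous_const.sub hf).measurable))
  -- positivity criterion for φ
  have hφ_pos : ∀ t : ℝ, 0 < t → 0 < φ t := by
    intro t ht
    calc (0:ℝ) = φ 0 := hφ_zero.symm
    _ < φ t := hφ_mono (Set.mem_Ici.2 le_rfl) (Set.mem_Ici.2 ht.le) ht
  refine ⟨⟨?_, ?_, ?_⟩, ?_⟩
  · -- (D1)
    intro f _ x hx
    have : ∀ z : X, ENNReal.ofReal (φ (max (f x - f z) 0)) = 0 := by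
      intro z
      have : max (f x - f z) 0 = 0 := max_eq_right (by linarith [hx z])
      simp [this, hφ_zero]
    simp [this]
  · -- (D2)
    intro f _ g _ x h
    refine lintegral_mono fun z => ?_
    exact ENNReal.ofReal_le_ofReal
      (hφ_mono.monotoneOn (Set.mem_Ici.2 (le_max_right _ 0)) (Set.mem_Ici.2 (le_max_right _ 0)) (h z))
  · -- (D3)
    intro f hf x r hr hpos hfin
    have hle : ∀ z : X, ENNReal.ofReal (φ (max (f x - f z) 0)) ≤
        ENNReal.ofReal (φ (max (r * f x - r * f z) 0)) := by
      intro z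
      have h1 : max (f x - f z) 0 ≤ max (r * f x - r * f z) 0 := by
        rw [← mul_sub]
        rcases le_or_gt (f x - f z) 0 with h | h
        · simp [max_eq_right h, max_eq_right (mul_nonpos_of_nonneg_of_nonpos (le_of_lt (lt_trans zero_lt_one hr)) h)]
        · have : f x - f z ≤ r * (f x - f z) := le_mul_of_one_le_left h.le hr.le
          exact max_le_max this le_rfl
      exact ENNReal.ofReal_le_ofReal
        (hφ_mono.monotoneOn (Set.mem_Ici.2 (le_max_right _ 0)) (Set.mem_Ici.2 (le_max_right _ 0)) h1)
    -- the support of the integrand has positive measure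
    have hm := hmeas f hf.1 x
    have hsupp : 0 < μ x (Function.support fun y =>
        ENNReal.ofReal (φ (max (f x - f y) 0))) :=
      (lintegral_pos_iff_support hm).1 hpos
    refine lintegral_strict_mono_of_ae_le_of_ae_lt_on
      ((hmeas (fun y => r * f y) (continuous_const.mul hf.1) x).aemeasurable)
      hfin.ne (Filter.Eventually.of_forall hle) hsupp.ne'
      (Filter.Eventually.of_forall ?_)
    intro z hz
    have hz' : 0 < max (f x - f z) 0 := by
      by_contra h
      have h0 : max (f x - f z) 0 = 0 := le_antisymm (not_lt.1 h) (le_max_right _ _)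
      apply hz
      simp [h0, hφ_zero]
    have hmax : max (f x - f z) 0 = f x - f z := max_eq_left (by
      rcases max_cases (f x - f z) (0:ℝ) with ⟨h1, _⟩ | ⟨h1, _⟩
      · rw [h1] at hz'; exact hz'.le
      · rw [h1] at hz'; exact absurd hz' (lt_irrefl 0))
    have hlt : max (f x - f z) 0 < max (r * f x - r * f z) 0 := by
      rw [← mul_sub, hmax]
      have : f x - f z < r * (f x - f z) := by
        nlinarith [hmax ▸ hz']
      exact lt_of_lt_of_le this (le_max_left _ _)
    refine ENNReal.ofReal_lt_ofReal_iff ?_ |>.2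
      (hφ_mono (Set.mem_Ici.2 (le_max_right _ _)) (Set.mem_Ici.2 (le_max_right _ _)) hlt)
    exact hφ_pos _ (lt_of_le_of_lt (le_max_right _ _) hlt)
  · -- finiteness for strictly coercive functions
    intro f hf hcoer x
    set K : Set X := {z | f z ≤ f x} with hK
    have hKc : IsCompact K := hcoer x
    have hKne : K.Nonempty := ⟨x, show f x ≤ f x from le_rfl⟩
    obtain ⟨m, hmK, hm⟩ := hKc.exists_isMinOn hKne hf.continuousOn
    set c : ENNReal := ENNReal.ofReal (φ (max (f x - f m) 0)) with hc
    have hbound : ∀ y : X, ENNReal.ofReal (φ (max (f x - f y) 0)) ≤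
        K.indicator (fun _ => c) y := by
      intro y
      by_cases hy : y ∈ K
      · rw [Set.indicator_of_mem hy]
        refine ENNReal.ofReal_le_ofReal
          (hφ_mono.monotoneOn (Set.mem_Ici.2 (le_max_right _ 0)) (Set.mem_Ici.2 (le_max_right _ 0)) ?_)
        exact max_le_max (by linarith [isMinOn_iff.1 hm y hy]) le_rfl
      · rw [Set.indicator_of_notMem hy]
        have : f x < f y := lt_of_not_ge hy
        have : max (f x - f y) 0 = 0 := max_eq_right (by linarith)
        simp [this, hφ_zero]
    calc (∫⁻ y, ENNReal.ofReal (φ (max (f x - f y) 0)) ∂(μ x))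
        ≤ ∫⁻ y, K.indicator (fun _ => c) y ∂(μ x) := lintegral_mono hbound
      _ = c * μ x K :=
          lintegral_indicator_const (measurableSet_le hf.measurable measurable_const) c
      _ < ⊤ := ENNReal.mul_lt_top ENNReal.ofReal_lt_top (hμ x K hKc)
end

section
/- Let V be a finite nonempty set and L : V × V → ℝ a Markov generator. For f : V → ℝ define T_L[f](x) := Σ_{y∈V} L(x,y)·(f(x) − f(y))₊. Say x ⟶_f y if there is a finite sequence x₀ = x, x₁, …, x_N = y (N ≥ 0) with L(x_k, x_{k+1}) > 0 and f(x_{k+1}) ≤ f(x_k) for all 0 ≤ k < N, and let M(f) := { x̄ ∈ V : for every x ∈ V, x̄ ⟶_f x implies x ⟶_f x̄ }. If f, g : V → ℝ satisfy (i) T_L[f](x) ≥ T_L[g](x) for all x ∈ V and (ii) f(x) ≥ g(x) for all x ∈ M(f), then f(x) ≥ g(x) for all x ∈ V. -/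
/-- In a finite type, any reflexive-transitive closure relation admits, from each
point, a reachable point that is minimal (everything reachable from it reaches back). -/
lemma exists_reach_minimal {V : Type*} [Fintype V] (r : V → V → Prop) (x : V) :
    ∃ z, Relation.ReflTransGen r x z ∧
      ∀ w, Relation.ReflTransGen r z w → Relation.ReflTransGen r w z := by
  classical
  set R := Relation.ReflTransGen r with hR
  let S : V → Finset V := fun a => Finset.univ.filter (fun b => R a b)
  obtain ⟨z, hz, hmin⟩ := Finset.exists_min_image (Finset.univ.filter (fun b => R x b))
    (fun a => (S a).card) ⟨x, by simpa using (Relation.ReflTransGen.refl : R x x)⟩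
  have hxz : R x z := (Finset.mem_filter.1 hz).2
  refine ⟨z, hxz, fun w hw => ?_⟩
  have hsub : S w ⊆ S z := by
    intro u hu
    simp only [S, Finset.mem_filter, Finset.mem_univ, true_and] at hu ⊢
    exact hw.trans hu
  have hle : (S z).card ≤ (S w).card := by
    apply hmin
    simp only [Finset.mem_filter, Finset.mem_univ, true_and]
    exact hxz.trans hw
  have heq : S w = S z := Finset.eq_of_subset_of_card_le hsub hle
  have : z ∈ S w := by
    rw [heq]
    simp only [S, Finset.mem_filter, Finset.mem_univ, true_and]
    exact Relation.ReflTransGen.refl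
  simpa [S] using (Finset.mem_filter.1 this).2

/-- **Probabilistic comparison principle on a finite state space.**
Let `L` be a Markov generator on a finite nonempty set `V` and set
`T_L[h](x) = Σ_y L(x,y)(h(x)-h(y))₊`.  Write `x ⟶_f y` when there is an
`L`-path from `x` to `y` along which `f` is non-increasing, and let
`M(f)` be the set of `⟶_f`-minimal points.  If `T_L[f] ≥ T_L[g]` pointwise
and `f ≥ g` on `M(f)`, then `f ≥ g` everywhere. -/
theorem finite_markov_comparison
    {V : Type*} [Fintype V] [Nonempty V]
    (L : V → V → ℝ)
    (hL_offdiag : ∀ x y, x ≠ y → 0 ≤ L x y)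
    (hL_rows : ∀ x, ∑ y, L x y = 0)
    (f g : V → ℝ)
    (hT : ∀ x, ∑ y, L x y * max (g x - g y) 0 ≤ ∑ y, L x y * max (f x - f y) 0)
    -- f ≥ g on M(f)
    (hM : ∀ x : V,
      (∀ z : V,
        Relation.ReflTransGen (fun a b => 0 < L a b ∧ f b ≤ f a) x z →
        Relation.ReflTransGen (fun a b => 0 < L a b ∧ f b ≤ f a) z x) →
      g x ≤ f x) :
    ∀ x, g x ≤ f x := by
  classical
  by_contra hc
  push_neg at hc
  obtain ⟨x₁, hx₁⟩ := hc
  set r : V → V → Prop := fun a b => 0 < L a b ∧ f b ≤ f a with hr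
  obtain ⟨x₀, -, hmax⟩ := Finset.exists_max_image Finset.univ (fun x => g x - f x)
    ⟨x₁, Finset.mem_univ _⟩
  set m := g x₀ - f x₀ with hm
  have hm_pos : 0 < m := lt_of_lt_of_le (by linarith) (hmax x₁ (Finset.mem_univ _))
  -- one-step closure of the maximizer set
  have step : ∀ a b, g a - f a = m → r a b → g b - f b = m := by
    intro a b ha hab
    -- each term of the difference is ≤ 0, and the sum is ≥ 0, so each term is 0
    have hterm : ∀ y ∈ Finset.univ,
        L a y * max (f a - f y) 0 - L a y * max (g a - g y) 0 ≤ 0 := by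
      intro y _
      by_cases hya : y = a
      · subst hya; simp
      · have hLy : 0 ≤ L a y := hL_offdiag a y (fun h => hya h.symm)
        have hdiff : f a - f y ≤ g a - g y := by
          have h1 := hmax y (Finset.mem_univ y)
          linarith [ha]
        have : max (f a - f y) 0 ≤ max (g a - g y) 0 :=
          max_le_max hdiff le_rfl
        nlinarith
    have hsum : 0 ≤ ∑ y, (L a y * max (f a - f y) 0 - L a y * max (g a - g y) 0) := by
      rw [Finset.sum_sub_distrib]
      linarith [hT a]
    have hzero : ∀ y ∈ Finset.univ,
        L a y * max (f a - f y) 0 - L a y * max (g a - g y) 0 = 0 := by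
      have hsum' : ∑ y, (L a y * max (f a - f y) 0 - L a y * max (g a - g y) 0) = 0 :=
        le_antisymm (Finset.sum_nonpos hterm) hsum
      intro y hy
      have := (Finset.sum_eq_zero_iff_of_nonpos hterm).1 hsum' y hy
      exact this
    have hb := hzero b (Finset.mem_univ b)
    obtain ⟨hLab, hfba⟩ := hab
    have heqmax : max (f a - f b) 0 = max (g a - g b) 0 := by
      have : L a b * (max (f a - f b) 0 - max (g a - g b) 0) = 0 := by ring_nf; linarith [hb]
      have := mul_eq_zero.1 this
      rcases this with h | h
      · exact absurd h (ne_of_gt hLab)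
      · linarith
    have hfab : 0 ≤ f a - f b := by linarith
    have hdiff : f a - f b ≤ g a - g b := by
      have h1 := hmax b (Finset.mem_univ b)
      linarith [ha]
    have hgab : 0 ≤ g a - g b := le_trans hfab hdiff
    rw [max_eq_left hfab, max_eq_left hgab] at heqmax
    linarith [ha]
  -- closure under reflexive-transitive closure
  have closure : ∀ b, Relation.ReflTransGen r x₀ b → g b - f b = m := by
    intro b hb
    induction hb with
    | refl => exact hm.symm
    | tail _ hstep ih => exact step _ _ ih hstep
  obtain ⟨z, hxz, hzmin⟩ := exists_reach_minimal r x₀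
  have hz : g z - f z = m := closure z hxz
  have := hM z hzmin
  linarith
end

section
/- Let V be a finite nonempty set and let T be a homogeneous descent modulus on V, i.e., T assigns to each f : V → ℝ a function T[f] : V → [0,+∞) such that: T[f](x) = 0 at every global minimizer x of f; T is monotone ((f(x) − f(z))₊ ≥ (g(x) − g(z))₊ for all z ∈ V implies T[f](x) ≥ T[g](x)); and T[r·f] = r·T[f] for all r ≥ 0. For x ∈ V set K_x(T) := { K ⊆ V : x ∈ K and T[𝟙_K](x) = 0 } and D_x(T) := ⋂_{K ∈ K_x(T)} K, where 𝟙_K is the characteristic function of K. Assume hypothesis (H): D_x(T) ∈ K_x(T) for every x ∈ V. Then there exists an active neighborhood system D = {D_x}_{x∈V} (i.e., x ∈ D_x ⊆ V for all x) such that T is equivalent to the descent modulus T_D[f](x) := max_{y ∈ D_x} (f(x) − f(y))₊, meaning that for every f : V → ℝ, { x ∈ V : T[f](x) = 0 } = { x ∈ V : f(y) ≥ f(x) for all y ∈ D_x }. -/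
/-- **Classification of homogeneous descent moduli on a finite set.**
Let `T` be a homogeneous descent modulus on a finite nonempty set `V`
(preserving global minima, monotone, and satisfying `T[r·f] = r·T[f]` for
`r ≥ 0`).  For `x ∈ V`, let `K_x(T) = {K ⊆ V : x ∈ K, T[𝟙_K](x) = 0}` and
`D_x(T) = ⋂ K_x(T)`.  Under hypothesis (H): `D_x(T) ∈ K_x(T)` for all `x`,
there exists an active neighborhood system `D` (with `x ∈ D_x` for all `x`)
such that `T` is equivalent to `T_D[f](x) = max_{y ∈ D_x} (f(x)-f(y))₊`,
i.e. for every `f`, `{x : T[f](x) = 0} = {x : ∀ y ∈ D_x, f(y) ≥ f(x)}`. -/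
theorem classification_of_homogeneous_descent_moduli
    {V : Type*} [Fintype V] [Nonempty V]
    (T : (V → ℝ) → V → ℝ)
    (hT_nonneg : ∀ f : V → ℝ, ∀ x : V, 0 ≤ T f x)
    -- (D1) preservation of global minima
    (hD1 : ∀ f : V → ℝ, ∀ x : V, (∀ z, f x ≤ f z) → T f x = 0)
    -- (D2) monotonicity
    (hD2 : ∀ f g : V → ℝ, ∀ x : V,
      (∀ z, max (g x - g z) 0 ≤ max (f x - f z) 0) → T g x ≤ T f x)
    -- homogeneity
    (hhom : ∀ r : ℝ, 0 ≤ r → ∀ f : V → ℝ, ∀ x : V,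
      T (fun v => r * f v) x = r * T f x)
    -- hypothesis (H): D_x(T) ∈ K_x(T) for every x
    (hH : ∀ x : V,
      x ∈ ⋂₀ {K : Set V | x ∈ K ∧ T (K.indicator fun _ => (1 : ℝ)) x = 0} ∧
      T ((⋂₀ {K : Set V | x ∈ K ∧
            T (K.indicator fun _ => (1 : ℝ)) x = 0}).indicator
          fun _ => (1 : ℝ)) x = 0) :
    ∃ D : V → Set V, (∀ x, x ∈ D x) ∧
      ∀ f : V → ℝ, {x | T f x = 0} = {x | ∀ y ∈ D x, f x ≤ f y} := by
  classical
  set Dx : V → Set V := fun x =>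
    ⋂₀ {K : Set V | x ∈ K ∧ T (K.indicator fun _ => (1 : ℝ)) x = 0} with hDxdef
  -- scaled monotonicity
  have key : ∀ (c : ℝ), 0 ≤ c → ∀ f g : V → ℝ, ∀ x : V,
      (∀ z, max (g x - g z) 0 ≤ c * max (f x - f z) 0) → T g x ≤ c * T f x := by
    intro c hc f g x h
    have h2 : T g x ≤ T (fun v => c * f v) x := by
      apply hD2
      intro z
      have : max (c * f x - c * f z) 0 = c * max (f x - f z) 0 := by
        rw [← mul_sub]
        rw [mul_max_of_nonneg _ _ hc, mul_zero]
      rw [this]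
      exact h z
    calc T g x ≤ T (fun v => c * f v) x := h2
      _ = c * T f x := hhom c hc f x
  refine ⟨Dx, fun x => (hH x).1, fun f => ?_⟩
  ext x
  simp only [Set.mem_setOf_eq]
  constructor
  · intro hTf y hy
    by_contra hlt
    push_neg at hlt
    set K : Set V := {z | f y < f z} with hK
    have hxK : x ∈ K := hlt
    have hc : (0:ℝ) < f x - f y := by linarith
    have hind : T (K.indicator fun _ => (1:ℝ)) x = 0 := by
      have hle : T (K.indicator fun _ => (1:ℝ)) x ≤ (f x - f y)⁻¹ * T f x := by
        apply key _ (le_of_lt (inv_pos.mpr hc))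
        intro z
        by_cases hz : z ∈ K
        · rw [Set.indicator_of_mem hxK, Set.indicator_of_mem hz]
          simp only [sub_self, max_self]
          positivity
        · rw [Set.indicator_of_mem hxK, Set.indicator_of_notMem hz]
          have hfz : f z ≤ f y := by
            simp only [hK, Set.mem_setOf_eq, not_lt] at hz; exact hz
          have h1 : f x - f y ≤ f x - f z := by linarith
          have h2 : max (f x - f z) 0 = f x - f z := max_eq_left (by linarith)
          rw [h2]
          have : (1:ℝ) = (f x - f y)⁻¹ * (f x - f y) := by
            field_simp
          calc max ((1:ℝ) - 0) 0 = 1 := by norm_num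
            _ = (f x - f y)⁻¹ * (f x - f y) := this
            _ ≤ (f x - f y)⁻¹ * (f x - f z) := by
                apply mul_le_mul_of_nonneg_left h1 (le_of_lt (inv_pos.mpr hc))
      rw [hTf, mul_zero] at hle
      exact le_antisymm hle (hT_nonneg _ _)
    have hyK : y ∈ K := hy K ⟨hxK, hind⟩
    exact lt_irrefl (f y) hyK
  · intro hf
    set K : Set V := {z | f x ≤ f z} with hK
    have hxK : x ∈ K := le_refl (f x)
    have hsub : Dx x ⊆ K := fun z hz => hf z hz
    -- T[1_K](x) = 0 by comparison with indicator of Dx x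
    have hindD : T ((Dx x).indicator fun _ => (1:ℝ)) x = 0 := (hH x).2
    have hindK : T (K.indicator fun _ => (1:ℝ)) x = 0 := by
      have hle : T (K.indicator fun _ => (1:ℝ)) x
          ≤ 1 * T ((Dx x).indicator fun _ => (1:ℝ)) x := by
        apply key 1 zero_le_one
        intro z
        rw [one_mul]
        by_cases hz : z ∈ Dx x
        · rw [Set.indicator_of_mem hxK, Set.indicator_of_mem (hsub hz)]
          simp only [sub_self, max_self]
          exact le_max_right _ _
        · rw [Set.indicator_of_mem hxK, Set.indicator_of_mem ((hH x).1),
            Set.indicator_of_notMem hz]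
          by_cases hzK : z ∈ K
          · rw [Set.indicator_of_mem hzK]
            simp
          · rw [Set.indicator_of_notMem hzK]
      rw [hindD, mul_zero] at hle
      exact le_antisymm hle (hT_nonneg _ _)
    -- compare f with M * 1_K
    set M : ℝ := Finset.univ.sup' Finset.univ_nonempty (fun z => max (f x - f z) 0) with hM
    have hM0 : 0 ≤ M :=
      le_trans (le_max_right (f x - f x) 0)
        (Finset.le_sup' (fun z => max (f x - f z) 0) (Finset.mem_univ x))
    have hle : T f x ≤ M * T (K.indicator fun _ => (1:ℝ)) x := by
      apply key M hM0
      intro z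
      by_cases hz : z ∈ K
      · rw [Set.indicator_of_mem hxK, Set.indicator_of_mem hz]
        have : f x ≤ f z := hz
        simp only [sub_self, max_self, mul_zero]
        exact max_le (by linarith) le_rfl
      · rw [Set.indicator_of_mem hxK, Set.indicator_of_notMem hz]
        rw [sub_zero, max_eq_left zero_le_one, mul_one]
        exact Finset.le_sup' (fun z => max (f x - f z) 0) (Finset.mem_univ z)
    rw [hindK, mul_zero] at hle
    exact le_antisymm hle (hT_nonneg _ _)
end
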